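/- arXiv:1303.0374 — 10 statements merged into one kernel-verified Lean document; each statement's English description precedes it below -/
import Mathlib

section
/- Let B be a nonempty compact metric space and let F : B × [0,1] → B × [0,1] be a continuous map of the form F(b, y) = (f(b), g(b, y)) for some continuous maps f : B → B and g : B × [0,1] → [0,1]. Then F is not minimal, i.e. no fibre-preserving continuous selfmap of the product B × [0,1] has all forward orbits dense. -/
/-!
Suppose `F(b, y) = (f b, g (b, y))` is minimal on `B × [0,1]`. Minimality on a compact space forces
`C = univ` for every nonempty closed `C ⊆ F '' C`: the points whose whole forward orbit stays
in `C` form a nonempty closed invariant set.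

If some fibre map `g (b₀, ·)` leaves the interval spanned by its endpoint values, say
`g (b₀, 0), g (b₀, 1) < g (b₀, c)`, let `O` be the open set of `(b, y)` with `y < c` and
`g (b, 1) < g (b, y) < g (b, c)`. By the intermediate value theorem every point of `O` has a
twin `(b, ξ)` with `ξ ≥ c` and the same image, so `Oᶜ ⊆ F '' Oᶜ`; since `O` is nonempty this is
impossible. A dip below both endpoint values is the same situation for the reversed order on the values.

Otherwise every fibre map takes its values between its endpoint values, so a point whose image lies
on the boundary `B × {0, 1}` has a twin on that boundary, and the boundary is again a proper closed
set with `C ⊆ F '' C`.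
-/

open Set Function OrderDual unitInterval

def IsMinimalMap {X : Type*} [TopologicalSpace X] (F : X → X) : Prop :=
  ∀ x, Dense (range fun n => F^[n] x)

section Minimal

variable {X : Type*} {F : X → X} {C : Set X}

variable (F C) in
def staysIn : ℕ → Set X
  | 0 => C
  | n + 1 => C ∩ F ⁻¹' staysIn n

theorem staysIn_subset (n : ℕ) : staysIn F C n ⊆ C := by
  cases n
  · exact subset_rfl
  · exact inter_subset_left

theorem staysIn_succ_subset (n : ℕ) : staysIn F C (n + 1) ⊆ staysIn F C n := by
  induction n with
  | zero => exact inter_subset_left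
  | succ n ih => exact inter_subset_inter_right _ (preimage_mono ih)

theorem isClosed_staysIn [TopologicalSpace X] (hF : Continuous F) (hC : IsClosed C) (n : ℕ) :
    IsClosed (staysIn F C n) := by
  induction n with
  | zero => exact hC
  | succ n ih => exact hC.inter (ih.preimage hF)

theorem staysIn_nonempty (hne : C.Nonempty) (hsub : C ⊆ F '' C) (n : ℕ) :
    (staysIn F C n).Nonempty := by
  induction n with
  | zero => exact hne
  | succ n ih =>
    obtain ⟨z, hz⟩ := ih
    obtain ⟨x, hxC, rfl⟩ := hsub (staysIn_subset n hz)
    exact ⟨x, hxC, hz⟩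

theorem mapsTo_iInter_staysIn : MapsTo F (⋂ n, staysIn F C n) (⋂ n, staysIn F C n) :=
  fun _ hx => mem_iInter.2 fun n => (mem_iInter.1 hx (n + 1)).2

variable [TopologicalSpace X]

theorem IsMinimalMap.eq_univ_of_mapsTo (hmin : IsMinimalMap F) (hC : IsClosed C)
    (hne : C.Nonempty) (hmaps : MapsTo F C C) : C = univ := by
  obtain ⟨x, hx⟩ := hne
  have horbit : range (fun n => F^[n] x) ⊆ C := range_subset_iff.2 fun n => hmaps.iterate n hx
  exact hC.closure_eq.symm.trans ((hmin x).mono horbit).closure_eq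

theorem IsMinimalMap.surjective [CompactSpace X] [T2Space X] (hmin : IsMinimalMap F)
    (hF : Continuous F) : Surjective F := fun z =>
  eq_univ_iff_forall.1 (hmin.eq_univ_of_mapsTo (isCompact_range hF).isClosed
    ⟨F z, mem_range_self z⟩ fun _ _ => mem_range_self _) z

theorem IsMinimalMap.eq_univ_of_subset_image [CompactSpace X] (hmin : IsMinimalMap F)
    (hF : Continuous F) (hC : IsClosed C) (hne : C.Nonempty) (hsub : C ⊆ F '' C) : C = univ := by
  have hK : (⋂ n, staysIn F C n).Nonempty :=
    IsCompact.nonempty_iInter_of_sequence_nonempty_isCompact_isClosed _ staysIn_succ_subset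
      (staysIn_nonempty hne hsub) hC.isCompact (isClosed_staysIn hF hC)
  have hKuniv := hmin.eq_univ_of_mapsTo (isClosed_iInter (isClosed_staysIn hF hC)) hK
    mapsTo_iInter_staysIn
  exact eq_univ_of_univ_subset (hKuniv ▸ iInter_subset _ 0)

end Minimal

section Hump

variable {B Y δ : Type*} [TopologicalSpace B]
  [ConditionallyCompleteLinearOrder Y] [TopologicalSpace Y] [OrderTopology Y]
  [LinearOrder δ] [TopologicalSpace δ] [OrderClosedTopology δ]
  {G : B × Y → δ} {c hi : Y}

def humpSet (G : B × Y → δ) (c hi : Y) : Set (B × Y) :=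
  {p | p.2 < c ∧ G (p.1, hi) < G p ∧ G p < G (p.1, c)}

theorem isOpen_humpSet (hG : Continuous G) : IsOpen (humpSet G c hi) :=
  (isOpen_lt continuous_snd continuous_const).inter <|
    (isOpen_lt (hG.comp (continuous_fst.prodMk continuous_const)) hG).inter
      (isOpen_lt hG (hG.comp (continuous_fst.prodMk continuous_const)))

theorem humpSet_nonempty [DenselyOrdered Y] [DenselyOrdered δ] (hG : Continuous G) {b₀ : B}
    {lo : Y} (hlo : lo ≤ c) (hlo_lt : G (b₀, lo) < G (b₀, c))
    (hhi_lt : G (b₀, hi) < G (b₀, c)) : (humpSet G c hi).Nonempty := by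
  obtain ⟨w, hw, hwc⟩ := exists_between (max_lt hlo_lt hhi_lt)
  obtain ⟨q, hq, hqw⟩ := intermediate_value_Icc hlo
    (hG.comp (Continuous.prodMk_right b₀)).continuousOn
    ⟨(le_max_left _ _).trans hw.le, hwc.le⟩
  change G (b₀, q) = w at hqw
  have hqc : q ≠ c := by rintro rfl; exact hwc.ne' hqw
  exact ⟨(b₀, q), hq.2.lt_of_ne hqc, hqw ▸ (le_max_right _ _).trans_lt hw, hqw ▸ hwc⟩

/-- The intermediate value theorem on `[c, hi]` gives every point of `humpSet G c hi` a twin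
outside it, in the same fibre and with the same value of `G`, hence with the same image. -/
theorem compl_humpSet_subset_image [DenselyOrdered Y] {F : B × Y → B × Y} (hsurj : Surjective F)
    (hG : Continuous G) (hFG : ∀ b y y', G (b, y) = G (b, y') → F (b, y) = F (b, y'))
    (hhi : c ≤ hi) : (humpSet G c hi)ᶜ ⊆ F '' (humpSet G c hi)ᶜ := by
  intro z _
  obtain ⟨⟨b, y⟩, rfl⟩ := hsurj z
  by_cases hy : (b, y) ∈ humpSet G c hi
  · obtain ⟨ξ, hξ, hξy⟩ := intermediate_value_Icc' hhi
      (hG.comp (Continuous.prodMk_right b)).continuousOn ⟨hy.2.1.le, hy.2.2.le⟩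
    exact ⟨(b, ξ), fun hξO => hξO.1.not_ge hξ.1, hFG b ξ y hξy⟩
  · exact ⟨(b, y), hy, rfl⟩

theorem not_isMinimalMap_of_hump [DenselyOrdered Y] [DenselyOrdered δ] [CompactSpace B] [T2Space B]
    [CompactSpace Y] {F : B × Y → B × Y} (hF : Continuous F) (hG : Continuous G)
    (hFG : ∀ b y y', G (b, y) = G (b, y') → F (b, y) = F (b, y'))
    {b₀ : B} {lo : Y} (hlo : lo ≤ c) (hhi : c ≤ hi)
    (hlo_lt : G (b₀, lo) < G (b₀, c)) (hhi_lt : G (b₀, hi) < G (b₀, c)) :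
    ¬ IsMinimalMap F := by
  intro hmin
  obtain ⟨p, hp⟩ := humpSet_nonempty hG hlo hlo_lt hhi_lt
  have hcompl := hmin.eq_univ_of_subset_image hF (isOpen_humpSet hG).isClosed_compl
    ⟨(b₀, c), fun h => h.1.false⟩ (compl_humpSet_subset_image (hmin.surjective hF) hG hFG hhi)
  exact (hcompl.symm ▸ mem_univ p : p ∈ (humpSet G c hi)ᶜ) hp

end Hump

theorem lt_and_lt_or_lt_and_lt_of_notMem_uIcc {α : Type*} [LinearOrder α] {a b x : α}
    (hx : x ∉ uIcc a b) : x < a ∧ x < b ∨ a < x ∧ b < x := by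
  simpa only [uIcc, mem_Icc, not_and_or, not_le, lt_inf_iff, sup_lt_iff] using hx

section Boundary

variable {B Y : Type*} [LinearOrder Y] [BoundedOrder Y]

theorem eq_or_eq_of_mem_uIcc_of_bot_or_top {a b x : Y} (hx : x ∈ uIcc a b)
    (hext : x = ⊥ ∨ x = ⊤) : a = x ∨ b = x := by
  rcases hext with rfl | rfl
  · exact min_eq_bot.1 (le_bot_iff.1 hx.1)
  · exact max_eq_top.1 (top_le_iff.1 hx.2)

theorem snd_preimage_bot_top_subset_image {f : B → B} {g : B × Y → Y} {F : B × Y → B × Y}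
    (hF : ∀ p, F p = (f p.1, g p)) (hsurj : Surjective F)
    (hbetween : ∀ b y, g (b, y) ∈ uIcc (g (b, ⊥)) (g (b, ⊤))) :
    Prod.snd ⁻¹' {⊥, ⊤} ⊆ F '' (Prod.snd ⁻¹' {⊥, ⊤}) := by
  intro z hz
  obtain ⟨⟨b, y⟩, rfl⟩ := hsurj z
  rw [mem_preimage, hF, mem_insert_iff, mem_singleton_iff] at hz
  rcases eq_or_eq_of_mem_uIcc_of_bot_or_top (hbetween b y) hz with h | h
  · exact ⟨(b, ⊥), Or.inl rfl, by rw [hF, hF, h]⟩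
  · exact ⟨(b, ⊤), Or.inr rfl, by rw [hF, hF, h]⟩

theorem not_isMinimalMap_of_forall_mem_uIcc [TopologicalSpace B] [CompactSpace B] [T2Space B]
    [Nonempty B] [TopologicalSpace Y] [OrderTopology Y] [DenselyOrdered Y] [Nontrivial Y]
    [CompactSpace Y] {f : B → B} {g : B × Y → Y} {F : B × Y → B × Y}
    (hF : ∀ p, F p = (f p.1, g p)) (hFc : Continuous F)
    (hbetween : ∀ b y, g (b, y) ∈ uIcc (g (b, ⊥)) (g (b, ⊤))) : ¬ IsMinimalMap F := by
  intro hmin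
  obtain ⟨b⟩ := ‹Nonempty B›
  obtain ⟨y, hy_bot, hy_top⟩ := exists_between (bot_lt_top : (⊥ : Y) < ⊤)
  have hbdry := hmin.eq_univ_of_subset_image hFc
    ((Set.toFinite {(⊥ : Y), ⊤}).isClosed.preimage continuous_snd) ⟨(b, ⊥), Or.inl rfl⟩
    (snd_preimage_bot_top_subset_image hF (hmin.surjective hFc) hbetween)
  rcases (hbdry.symm ▸ mem_univ (b, y) : (b, y) ∈ Prod.snd ⁻¹' {⊥, ⊤}) with h | h
  · exact hy_bot.ne' h
  · exact hy_top.ne h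

end Boundary

/-- No fibre-preserving continuous selfmap of `B × [0,1]` is minimal,
i.e. it cannot have all forward orbits dense. -/
theorem no_minimal_skew_product_on_interval
    {B : Type*} [MetricSpace B] [CompactSpace B] [Nonempty B]
    (f : B → B) (hf : Continuous f)
    (g : B × I → I) (hg : Continuous g)
    (F : B × I → B × I) (hF : ∀ p, F p = (f p.1, g p)) :
    ¬ ∀ p : B × I, Dense (Set.range fun n => F^[n] p) := by
  have hFc : Continuous F := by
    rw [funext hF]
    exact (hf.comp continuous_fst).prodMk hg
  have hFg : ∀ b y y', g (b, y) = g (b, y') → F (b, y) = F (b, y') := fun b y y' h => by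
    rw [hF, hF, h]
  by_cases hbetween : ∀ b y, g (b, y) ∈ uIcc (g (b, 0)) (g (b, 1))
  · exact not_isMinimalMap_of_forall_mem_uIcc hF hFc hbetween
  simp only [not_forall] at hbetween
  obtain ⟨b, y, hy⟩ := hbetween
  rcases lt_and_lt_or_lt_and_lt_of_notMem_uIcc hy with ⟨hy0, hy1⟩ | ⟨hy0, hy1⟩
  · exact not_isMinimalMap_of_hump (G := toDual ∘ g) hFc (continuous_toDual.comp hg)
      (fun b y y' h => hFg b y y' (toDual_inj.1 h)) y.2.1 y.2.2 hy0 hy1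
  · exact not_isMinimalMap_of_hump hFc hg hFg y.2.1 y.2.2 hy0 hy1
end

section
/- Let B be a nonempty compact metric space, f : B → B a continuous minimal map, S¹ = ℝ/ℤ the circle, and F : B × S¹ → B × S¹ a continuous map of the form F(b, y) = (f(b), g(b, y)) with g : B × S¹ → S¹ continuous. Let M be a minimal set of F that is nowhere dense in B × S¹. Then either (E1) there is a residual set R ⊆ B such that for every b ∈ R the fibre M_b = {y ∈ S¹ : (b, y) ∈ M} is a Cantor set, or (E2) there are a positive integer N and a residual set R ⊆ B such that for every b ∈ R the fibre M_b has exactly N elements. -/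
/-!
Two residual sets of base points control the fibres `M_b`: the points where `b ↦ M_b` is lower
semicontinuous (Fort's theorem), and the points `b` sharing their forward orbit with no other point,
over which `M_{f^n b}` is the image of `M_b` under the fibre map of `F^n`. Pushing a fibre along a
dense orbit into a neighbourhood of another one shows that all fibres over the intersection of these
two sets have the same cardinality; if it is finite we are in case (E2).

Otherwise the generic fibres are infinite. They have empty interior because `M` is nowhere dense,
so they are totally disconnected subsets of the circle, and it remains to see that they have no
isolated points. The number of `ε`-isolated points of `M_b` is bounded and upper semicontinuous at
points of lower semicontinuity, hence generically equal to some `i ≥ 1` on an open set, where the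
`ε`-isolated points of nearby fibres cannot split. Around such a point of `M` there is then a box
that meets the fibres along a generic orbit in at most one point and that every orbit in `M` enters
within bounded time, which forces a finite fibre.
-/

open Set Filter Topology Function

section MinimalMap

variable {X : Type*} [TopologicalSpace X] {f : X → X}

theorem surjOn_of_subset_closure_range_iterate [T2Space X] (hf : Continuous f) {M : Set X}
    (hM : IsCompact M) (hMinv : MapsTo f M M)
    (hMmin : ∀ p ∈ M, M ⊆ closure (range fun n => f^[n] p)) : SurjOn f M M := by
  intro x hx
  refine (hM.image hf).isClosed.closure_subset_iff.2 ?_ (hMmin (f x) (hMinv hx) hx)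
  rintro _ ⟨n, rfl⟩
  exact ⟨f^[n] x, hMinv.iterate n hx, Commute.self_iterate f n x⟩

theorem IsCompact.exists_forall_exists_le_iterate_mem {K W : Set X} (hK : IsCompact K)
    (hf : Continuous f) (hW : IsOpen W) (h : ∀ p ∈ K, ∃ n, f^[n] p ∈ W) :
    ∃ N, ∀ p ∈ K, ∃ n ≤ N, f^[n] p ∈ W := by
  obtain ⟨t, ht⟩ := hK.elim_finite_subcover (fun n => f^[n] ⁻¹' W)
    (fun n => hW.preimage (hf.iterate n)) fun p hp => mem_iUnion.2 (h p hp)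
  refine ⟨t.sup id, fun p hp => ?_⟩
  obtain ⟨n, hn, hnW⟩ := mem_iUnion₂.1 (ht hp)
  exact ⟨n, Finset.le_sup (f := id) hn, hnW⟩

variable [CompactSpace X]

theorem surjective_of_dense_range_iterate [T2Space X] (hf : Continuous f)
    (hfmin : ∀ x, Dense (range fun n => f^[n] x)) : Surjective f :=
  surjOn_univ.1 <| surjOn_of_subset_closure_range_iterate hf isCompact_univ
    (mapsTo_univ _ _) fun p _ => (hfmin p).closure_eq ▸ Subset.rfl

/-- A minimal map is irreducible. -/
theorem image_ne_univ_of_dense_range_iterate (hf : Continuous f)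
    (hfmin : ∀ x, Dense (range fun n => f^[n] x)) {A : Set X} (hA : IsClosed A)
    (hAne : A ≠ univ) : f '' A ≠ univ := by
  intro hAf
  obtain ⟨x₀, hx₀⟩ := nonempty_compl.2 hAne
  obtain ⟨N, hN⟩ := isCompact_univ.exists_forall_exists_le_iterate_mem hf hA.isOpen_compl
    fun p _ => by
      obtain ⟨_, hA, n, rfl⟩ := (hfmin p).inter_open_nonempty _ hA.isOpen_compl ⟨x₀, hx₀⟩
      exact ⟨n, hA⟩
  -- `c` picks preimages in `A`, so `c^[N + 1] x₀` stays in `A` for `N` steps, unlike every orbit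
  choose c hcA hfc using fun x => (hAf ▸ mem_univ x : x ∈ f '' A)
  obtain ⟨n, hn, hnA⟩ := hN (c^[N + 1] x₀) (mem_univ _)
  obtain ⟨k, rfl⟩ := Nat.exists_eq_add_of_le hn
  apply hnA
  rw [add_assoc, iterate_add_apply, (LeftInverse.iterate hfc n) _, iterate_succ_apply']
  exact hcA _

variable [T2Space X]

theorem exists_isOpen_preimage_subset_of_dense_range_iterate (hf : Continuous f)
    (hfmin : ∀ x, Dense (range fun n => f^[n] x)) {V : Set X} (hV : IsOpen V)
    (hVne : V.Nonempty) : ∃ W, IsOpen W ∧ W.Nonempty ∧ f ⁻¹' W ⊆ V :=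
  ⟨(f '' Vᶜ)ᶜ, (hV.isClosed_compl.isCompact.image hf).isClosed.isOpen_compl,
    nonempty_compl.2 (image_ne_univ_of_dense_range_iterate hf hfmin hV.isClosed_compl
      (compl_ne_univ.2 hVne)),
    fun x hx => by_contra fun hxV => hx ⟨x, hxV, rfl⟩⟩

theorem Dense.preimage_of_dense_range_iterate (hf : Continuous f)
    (hfmin : ∀ x, Dense (range fun n => f^[n] x)) {s : Set X} (hs : Dense s) :
    Dense (f ⁻¹' s) := by
  refine dense_iff_inter_open.2 fun V hV hVne => ?_
  obtain ⟨W, hW, hWne, hWV⟩ := exists_isOpen_preimage_subset_of_dense_range_iterate hf hfmin hV hVne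
  obtain ⟨y, hyW, hys⟩ := hs.inter_open_nonempty W hW hWne
  obtain ⟨x, rfl⟩ := surjective_of_dense_range_iterate hf hfmin y
  exact ⟨x, hWV hyW, hys⟩

theorem tendsto_residual_of_dense_range_iterate (hf : Continuous f)
    (hfmin : ∀ x, Dense (range fun n => f^[n] x)) : Tendsto f (residual X) (residual X) := by
  apply le_countableGenerate_iff_of_countableInterFilter.mpr
  rintro t ⟨ht, htd⟩
  exact residual_of_dense_open (ht.preimage hf) (htd.preimage_of_dense_range_iterate hf hfmin)

theorem residual_forall_iterate_mem (hf : Continuous f)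
    (hfmin : ∀ x, Dense (range fun n => f^[n] x)) {s : Set X} (hs : s ∈ residual X) :
    {x | ∀ n, f^[n] x ∈ s} ∈ residual X :=
  eventually_countable_forall.2 fun n =>
    (tendsto_residual_of_dense_range_iterate hf hfmin).iterate n hs

end MinimalMap

section MinimalMapMetric

variable {X : Type*} [MetricSpace X] [CompactSpace X] {f : X → X}

theorem residual_subsingleton_preimage_singleton (hf : Continuous f)
    (hfmin : ∀ x, Dense (range fun n => f^[n] x)) :
    {y | (f ⁻¹' {y}).Subsingleton} ∈ residual X := by
  have hsmall : ∀ r > 0, {y | ∃ x, f ⁻¹' {y} ⊆ Metric.ball x r} ∈ residual X := by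
    intro r hr
    refine mem_of_superset (residual_of_dense_open isOpen_interior ?_) interior_subset
    refine dense_iff_inter_open.2 fun V hV hVne => ?_
    obtain ⟨x, hx⟩ := hVne.preimage (surjective_of_dense_range_iterate hf hfmin)
    obtain ⟨W, hW, ⟨w, hw⟩, hWsub⟩ := exists_isOpen_preimage_subset_of_dense_range_iterate hf
      hfmin (Metric.isOpen_ball.inter (hV.preimage hf)) ⟨x, Metric.mem_ball_self hr, hx⟩
    obtain ⟨z, rfl⟩ := surjective_of_dense_range_iterate hf hfmin w
    have hWs : W ⊆ {y | ∃ x, f ⁻¹' {y} ⊆ Metric.ball x r} := fun y hy =>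
      ⟨x, fun x' (hx' : f x' = y) => (hWsub (show f x' ∈ W by rwa [hx'])).1⟩
    exact ⟨f z, (hWsub hw).2, interior_maximal hWs hW hw⟩
  filter_upwards [countable_iInter_mem.2 fun k : ℕ => hsmall (1 / (k + 1)) Nat.one_div_pos_of_nat]
    with y hy x₁ h₁ x₂ h₂
  refine eq_of_forall_dist_le fun ε hε => ?_
  obtain ⟨k, hk⟩ := exists_nat_one_div_lt (half_pos hε)
  obtain ⟨x, hx⟩ := mem_iInter.1 hy k
  have h₁x : dist x₁ x < 1 / (k + 1) := hx h₁
  have h₂x : dist x₂ x < 1 / (k + 1) := hx h₂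
  linarith [dist_triangle_right x₁ x₂ x]

theorem residual_forall_iterate_eq_imp_eq (hf : Continuous f)
    (hfmin : ∀ x, Dense (range fun n => f^[n] x)) :
    {x | ∀ n x', f^[n] x' = f^[n] x → x' = x} ∈ residual X := by
  filter_upwards [residual_forall_iterate_mem hf hfmin
    (residual_subsingleton_preimage_singleton hf hfmin)] with x hx n
  induction n with
  | zero => exact fun _ h => h
  | succ n ih =>
    intro x' h
    rw [iterate_succ_apply', iterate_succ_apply'] at h
    exact ih x' (hx (n + 1) (by simpa [iterate_succ_apply'] using h)
      (by simp [iterate_succ_apply']))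

end MinimalMapMetric
section Fiber

variable {B Y : Type*} [TopologicalSpace B] [TopologicalSpace Y] {M : Set (B × Y)} {b : B}

def fiber (M : Set (B × Y)) (b : B) : Set Y := {y | (b, y) ∈ M}

theorem IsClosed.fiber (hM : IsClosed M) (b : B) : IsClosed (fiber M b) :=
  hM.preimage (Continuous.prodMk_right b)

def FiberLowerSemicontinuousAt (M : Set (B × Y)) (b : B) : Prop :=
  ∀ y ∈ fiber M b, ∀ U ∈ 𝓝 y, ∀ᶠ b' in 𝓝 b, (fiber M b' ∩ U).Nonempty

open TopologicalSpace in
/-- Fort's theorem. -/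
theorem residual_fiberLowerSemicontinuousAt [CompactSpace Y] [SecondCountableTopology Y]
    [RegularSpace Y] (hM : IsClosed M) : {b | FiberLowerSemicontinuousAt M b} ∈ residual B := by
  let C : Set Y → Set B := fun V => Prod.fst '' (M ∩ univ ×ˢ closure V)
  have hC : ∀ V, IsClosed (C V) := fun V =>
    isClosedMap_fst_of_compactSpace _ (hM.inter (isClosed_univ.prod isClosed_closure))
  have hres : ∀ V ∈ countableBasis Y, (frontier (C V))ᶜ ∈ residual B := fun V _ =>
    residual_of_dense_open isClosed_frontier.isOpen_compl
      (interior_eq_empty_iff_dense_compl.1 (interior_frontier (hC V)))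
  filter_upwards [(countable_bInter_mem (countable_countableBasis Y)).2 hres] with b hb y hy U hU
  obtain ⟨U', hU', hU'c, hU'U⟩ := exists_mem_nhds_isClosed_subset hU
  obtain ⟨V, hV, hyV, hVU'⟩ := (isBasis_countableBasis Y).mem_nhds_iff.1 hU'
  have hbC : b ∈ interior (C V) := by
    rw [← self_sdiff_frontier]
    exact ⟨⟨(b, y), ⟨hy, trivial, subset_closure hyV⟩, rfl⟩, mem_iInter₂.1 hb V hV⟩
  filter_upwards [mem_interior_iff_mem_nhds.1 hbC] with b' hb'
  obtain ⟨⟨_, z⟩, ⟨hz, -, hzV⟩, rfl⟩ := hb'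
  exact ⟨z, hz, hU'U (hU'c.closure_subset_iff.2 hVU' hzV)⟩

open TopologicalSpace in
theorem residual_interior_fiber_eq_empty [SecondCountableTopology Y] (hM : IsClosed M)
    (hND : IsNowhereDense M) : {b | interior (fiber M b) = ∅} ∈ residual B := by
  have hres : ∀ V ∈ countableBasis Y, {b | V ⊆ fiber M b}ᶜ ∈ residual B := by
    intro V hV
    obtain ⟨y, hy⟩ := nonempty_of_mem_countableBasis hV
    have hclosed : IsClosed {b | V ⊆ fiber M b} := by
      have : {b | V ⊆ fiber M b} = ⋂ y ∈ V, (fun b => (b, y)) ⁻¹' M := by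
        ext; simp [subset_def, fiber]
      rw [this]
      exact isClosed_biInter fun y _ => hM.preimage (continuous_id.prodMk continuous_const)
    refine residual_of_dense_open hclosed.isOpen_compl
      (interior_eq_empty_iff_dense_compl.1 (eq_empty_of_forall_notMem fun b hb => ?_))
    have hbox : interior {b | V ⊆ fiber M b} ×ˢ V ⊆ interior M :=
      interior_maximal (fun p hp => interior_subset hp.1 hp.2)
        (isOpen_interior.prod (isOpen_of_mem_countableBasis hV))
    simpa [(hM.isNowhereDense_iff.1 hND)] using hbox (mk_mem_prod hb hy)
  filter_upwards [(countable_bInter_mem (countable_countableBasis Y)).2 hres] with b hb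
  refine eq_empty_of_forall_notMem fun y hy => ?_
  obtain ⟨V, hV, hyV, hVint⟩ :=
    (isBasis_countableBasis Y).mem_nhds_iff.1 (isOpen_interior.mem_nhds hy)
  exact mem_iInter₂.1 hb V hV (hVint.trans interior_subset)

theorem fiber_nonempty_of_dense_range_iterate [CompactSpace Y] {f : B → B} {F : B × Y → B × Y}
    (hfmin : ∀ b, Dense (range fun n => f^[n] b)) (hF : Semiconj Prod.fst F f)
    (hMne : M.Nonempty) (hM : IsClosed M) (hMinv : MapsTo F M M) (b : B) :
    (fiber M b).Nonempty := by
  obtain ⟨p, hp⟩ := hMne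
  have hsub : closure (range fun n => f^[n] p.1) ⊆ Prod.fst '' M :=
    (isClosedMap_fst_of_compactSpace _ hM).closure_subset_iff.2 <| range_subset_iff.2 fun n =>
      ⟨F^[n] p, hMinv.iterate n hp, hF.iterate_right n p⟩
  obtain ⟨⟨_, y⟩, hy, rfl⟩ := hsub ((hfmin p.1).closure_eq ▸ mem_univ b)
  exact ⟨y, hy⟩

end Fiber

theorem Set.Finite.exists_pos_pairwise_le_dist {Z : Type*} [MetricSpace Z] {s : Set Z}
    (hs : s.Finite) : ∃ δ > 0, s.Pairwise fun x y => δ ≤ dist x y := by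
  by_cases h : s.offDiag.Nonempty
  · obtain ⟨p, hp, hmin⟩ := s.offDiag.exists_min_image (fun p => dist p.1 p.2) hs.offDiag h
    obtain ⟨-, -, hne⟩ := mem_offDiag.1 hp
    exact ⟨_, dist_pos.2 hne, fun x hx y hy hxy => hmin (x, y) ⟨hx, hy, hxy⟩⟩
  · exact ⟨1, one_pos, fun x hx y hy hxy => (h ⟨(x, y), hx, hy, hxy⟩).elim⟩

section Separation

variable {Z : Type*} [PseudoMetricSpace Z]

theorem encard_le_encard_of_forall_exists_dist_lt {s t : Set Z} {δ : ℝ}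
    (hs : s.Pairwise fun x y => δ ≤ dist x y) (h : ∀ x ∈ s, ∃ y ∈ t, dist x y < δ / 2) :
    s.encard ≤ t.encard := by
  choose! g hgt hg using h
  refine encard_le_encard_of_injOn hgt fun x hx x' hx' hxx' => by_contra fun hne => ?_
  have h₁ := hg x hx
  have h₂ := hg x' hx'
  rw [← hxx'] at h₂
  linarith [hs hx hx' hne, dist_triangle_right x x' (g x)]

def epsIsolatedPoints (ε : ℝ) (s : Set Z) : Set Z := {y ∈ s | ∀ z ∈ s, dist z y < ε → z = y}

theorem pairwise_le_dist_epsIsolatedPoints {ε : ℝ} {s : Set Z} :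
    (epsIsolatedPoints ε s).Pairwise fun y z => ε ≤ dist y z :=
  fun _ hy _ hz hne => not_lt.1 fun h => hne (hz.2 _ hy.1 h)

theorem exists_forall_encard_epsIsolatedPoints_le [CompactSpace Z] {ε : ℝ} (hε : 0 < ε) :
    ∃ C : ℕ, ∀ s : Set Z, (epsIsolatedPoints ε s).encard ≤ C := by
  obtain ⟨t, -, ht, hcover⟩ := finite_cover_balls_of_compact (isCompact_univ (X := Z)) (half_pos hε)
  refine ⟨t.ncard, fun s => ht.cast_ncard_eq ▸ ?_⟩
  refine encard_le_encard_of_forall_exists_dist_lt pairwise_le_dist_epsIsolatedPoints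
    fun y _ => ?_
  obtain ⟨c, hc, hyc⟩ := mem_iUnion₂.1 (hcover (mem_univ y))
  exact ⟨c, hc, hyc⟩

end Separation

section IsolatedPointsOfFibers

variable {B Y : Type*} [TopologicalSpace B] [MetricSpace Y] {M : Set (B × Y)} {b : B} {ε : ℝ}

theorem mem_epsIsolatedPoints_of_mem_closure (hM : IsClosed M)
    (hb : FiberLowerSemicontinuousAt M b) {y : Y}
    (hy : (b, y) ∈ closure {p : B × Y | p.2 ∈ epsIsolatedPoints ε (fiber M p.1)}) :
    y ∈ epsIsolatedPoints ε (fiber M b) := by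
  have hyM : y ∈ fiber M b := hM.closure_subset_iff.2 (fun p hp => hp.1) hy
  refine ⟨hyM, fun z hz hzy => by_contra fun hne => ?_⟩
  have hρ : 0 < dist z y := dist_pos.2 hne
  obtain ⟨δ, hδ, hδ₁, hδ₂⟩ : ∃ δ > 0, 2 * δ ≤ dist z y ∧ 2 * δ ≤ ε - dist z y :=
    ⟨min (dist z y) (ε - dist z y) / 2, half_pos (lt_min hρ (sub_pos.2 hzy)),
      by linarith [min_le_left (dist z y) (ε - dist z y)],
      by linarith [min_le_right (dist z y) (ε - dist z y)]⟩
  obtain ⟨⟨b', y'⟩, ⟨⟨z', hz', hzz'⟩, hyy'⟩, hiso⟩ := mem_closure_iff_nhds.1 hy _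
    (prod_mem_nhds (hb z hz _ (Metric.ball_mem_nhds z hδ)) (Metric.ball_mem_nhds y hδ))
  have hzz' : dist z' z < δ := hzz'
  have hyy' : dist y' y < δ := hyy'
  obtain rfl : z' = y' := hiso.2 z' hz' (by
    linarith [dist_triangle4 z' z y y', dist_comm y y'])
  linarith [dist_triangle4 z z' y y, dist_comm z z', dist_self y]

variable [CompactSpace Y]

theorem eventually_epsIsolatedPoints_subset_thickening (hM : IsClosed M)
    (hb : FiberLowerSemicontinuousAt M b) {δ : ℝ} (hδ : 0 < δ) :
    ∀ᶠ b' in 𝓝 b, epsIsolatedPoints ε (fiber M b') ⊆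
      Metric.thickening δ (epsIsolatedPoints ε (fiber M b)) := by
  set Γ := {p : B × Y | p.2 ∈ epsIsolatedPoints ε (fiber M p.1)}
  set K := closure Γ ∩ univ ×ˢ (Metric.thickening δ (epsIsolatedPoints ε (fiber M b)))ᶜ
  have hK : IsClosed (Prod.fst '' K) := isClosedMap_fst_of_compactSpace _
    (isClosed_closure.inter (isClosed_univ.prod Metric.isOpen_thickening.isClosed_compl))
  have hbK : b ∉ Prod.fst '' K := by
    rintro ⟨⟨_, y⟩, ⟨hyΓ, -, hy⟩, rfl⟩
    exact hy (Metric.self_subset_thickening hδ _ (mem_epsIsolatedPoints_of_mem_closure hM hb hyΓ))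
  filter_upwards [hK.isOpen_compl.mem_nhds hbK] with b' hb' y hy
  by_contra h
  exact hb' ⟨(b', y), ⟨subset_closure hy, trivial, h⟩, rfl⟩

theorem encard_epsIsolatedPoints_le_of_mem_closure (hM : IsClosed M)
    (hb : FiberLowerSemicontinuousAt M b) (hε : 0 < ε) {m : ℕ∞}
    (hbm : b ∈ closure {b' | m ≤ (epsIsolatedPoints ε (fiber M b')).encard}) :
    m ≤ (epsIsolatedPoints ε (fiber M b)).encard := by
  obtain ⟨b', hb'm, hb'⟩ := ((mem_closure_iff_frequently.1 hbm).and_eventually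
    (eventually_epsIsolatedPoints_subset_thickening hM hb (half_pos hε))).exists
  exact hb'm.trans (encard_le_encard_of_forall_exists_dist_lt pairwise_le_dist_epsIsolatedPoints
    fun y hy => Metric.mem_thickening_iff.1 (hb' hy))

theorem eventually_subsingleton_fiber_inter_ball (hM : IsClosed M)
    (hb : FiberLowerSemicontinuousAt M b) (hε : 0 < ε)
    (hfin : (epsIsolatedPoints ε (fiber M b)).Finite) {y : Y}
    (hy : y ∈ epsIsolatedPoints ε (fiber M b)) :
    ∀ᶠ b' in 𝓝 b, (epsIsolatedPoints ε (fiber M b)).encard ≤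
      (epsIsolatedPoints ε (fiber M b')).encard →
      (fiber M b' ∩ Metric.ball y (ε / 2)).Subsingleton := by
  filter_upwards [eventually_epsIsolatedPoints_subset_thickening hM hb (half_pos hε)]
    with b' hsub hle
  obtain ⟨y', hy', hyy'⟩ : ∃ y' ∈ epsIsolatedPoints ε (fiber M b'), dist y' y < ε / 2 := by
    by_contra! hfar
    have hle' : (epsIsolatedPoints ε (fiber M b')).encard ≤
        (epsIsolatedPoints ε (fiber M b) \ {y}).encard :=
      encard_le_encard_of_forall_exists_dist_lt pairwise_le_dist_epsIsolatedPoints fun z hz => by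
        obtain ⟨w, hw, hzw⟩ := Metric.mem_thickening_iff.1 (hsub hz)
        refine ⟨w, ⟨hw, fun hwy => (hfar z hz).not_gt ?_⟩, hzw⟩
        rwa [← mem_singleton_iff.1 hwy]
    exact (hle.trans hle').not_gt (hfin.sdiff.encard_lt_encard (sdiff_singleton_ssubset.2 hy))
  have hclose : ∀ z ∈ fiber M b' ∩ Metric.ball y (ε / 2), z = y' := fun z hz =>
    hy'.2 z hz.1 (by linarith [dist_triangle_right z y' y, Metric.mem_ball.1 hz.2])
  exact fun z hz w hw => (hclose z hz).trans (hclose w hw).symm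

/-- The count of `ε`-isolated points is bounded, so there is a largest `i + 1` for which it is
non-meagrely often at least `i + 1`; by upper semicontinuity it is then at least `i + 1` on an open
set. -/
theorem exists_isOpen_le_encard_epsIsolatedPoints (hM : IsClosed M) (hε : 0 < ε)
    (hE : ¬IsMeagre
      {b | FiberLowerSemicontinuousAt M b ∧ (epsIsolatedPoints ε (fiber M b)).Nonempty}) :
    ∃ i : ℕ, ∃ V : Set B, IsOpen V ∧ V.Nonempty ∧
      (∀ b ∈ V, FiberLowerSemicontinuousAt M b →
        ((i + 1 : ℕ) : ℕ∞) ≤ (epsIsolatedPoints ε (fiber M b)).encard) ∧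
      IsMeagre {b | FiberLowerSemicontinuousAt M b ∧
        ((i + 2 : ℕ) : ℕ∞) ≤ (epsIsolatedPoints ε (fiber M b)).encard} := by
  set A : ℕ → Set B := fun m =>
    {b | FiberLowerSemicontinuousAt M b ∧ m ≤ (epsIsolatedPoints ε (fiber M b)).encard}
  obtain ⟨C, hC⟩ := exists_forall_encard_epsIsolatedPoints_le (Z := Y) hε
  obtain ⟨i, hi, hi'⟩ := Nat.exists_not_and_succ_of_not_zero_of_exists
    (p := fun m => IsMeagre (A (m + 1))) (by simpa [A] using hE)
    ⟨C, IsMeagre.empty.mono fun b hb =>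
      absurd (hb.2.trans (hC _)) (by exact_mod_cast Nat.not_succ_le_self C)⟩
  refine ⟨i, interior (closure (A (i + 1))), isOpen_interior,
    nonempty_iff_ne_empty.2 fun h => hi (IsNowhereDense.isMeagre h), fun b hb hlsc => ?_, hi'⟩
  exact encard_epsIsolatedPoints_le_of_mem_closure hM hlsc hε
    (closure_mono (fun b' hb' => hb'.2) (interior_subset hb))

end IsolatedPointsOfFibers

section SkewProduct

variable {B Y : Type*} {f : B → B} {F : B × Y → B × Y} {M : Set (B × Y)} {b : B}

theorem fiber_iterate_subset_image (hF : Semiconj Prod.fst F f) (hMsurj : SurjOn F M M)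
    (hb : ∀ n b', f^[n] b' = f^[n] b → b' = b) (n : ℕ) :
    fiber M (f^[n] b) ⊆ (fun y => (F^[n] (b, y)).2) '' fiber M b := by
  intro z hz
  obtain ⟨⟨b', y⟩, hy, hFy⟩ := hMsurj.iterate n hz
  obtain rfl : b' = b := hb n b' ((hF.iterate_right n (b', y)).symm.trans (congrArg Prod.fst hFy))
  exact ⟨y, hy, congrArg Prod.snd hFy⟩

variable [TopologicalSpace B]

/-- Every point of `M` enters `U ×ˢ V` within a bounded time `L`, so the fibre over `f^[L] b` is
covered by finitely many images of the subsingletons `fiber (M ∩ U ×ˢ V) (f^[n] b)`. -/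
theorem exists_finite_fiber_iterate [TopologicalSpace Y] (hFc : Continuous F)
    (hF : Semiconj Prod.fst F f) (hMc : IsCompact M) (hMinv : MapsTo F M M)
    (hMsurj : SurjOn F M M) (hMmin : ∀ p ∈ M, M ⊆ closure (range fun n => F^[n] p))
    (hb : ∀ n b', f^[n] b' = f^[n] b → b' = b) {U : Set B} {V : Set Y} (hU : IsOpen U)
    (hV : IsOpen V) {y : Y} (hby : (b, y) ∈ M ∩ U ×ˢ V)
    (htrap : ∀ n, (fiber (M ∩ U ×ˢ V) (f^[n] b)).Subsingleton) :
    ∃ L, (fiber M (f^[L] b)).Finite := by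
  obtain ⟨L, hL⟩ := hMc.exists_forall_exists_le_iterate_mem hFc (hU.prod hV) fun p hp => by
    obtain ⟨_, hW, n, rfl⟩ := mem_closure_iff.1 (hMmin p hp hby.1) _ (hU.prod hV) hby.2
    exact ⟨n, hW⟩
  have hsub : (fun z => (F^[L] (b, z)).2) '' fiber M b ⊆
      ⋃ n ∈ Iic L, (fun y => (F^[L - n] (f^[n] b, y)).2) '' fiber (M ∩ U ×ˢ V) (f^[n] b) := by
    rintro _ ⟨z, hz, rfl⟩
    obtain ⟨n, hn, hnW⟩ := hL (b, z) hz
    have hp : F^[n] (b, z) = (f^[n] b, (F^[n] (b, z)).2) := Prod.ext (hF.iterate_right n (b, z)) rfl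
    refine mem_biUnion (x := n) hn ⟨(F^[n] (b, z)).2, ?_, ?_⟩
    · change (f^[n] b, _) ∈ M ∩ U ×ˢ V
      rw [← hp]
      exact ⟨hMinv.iterate n hz, hnW⟩
    · change (F^[L - n] (f^[n] b, _)).2 = _
      rw [← hp, ← iterate_add_apply, Nat.sub_add_cancel hn]
  exact ⟨L, (((finite_Iic L).biUnion fun n _ => (htrap n).finite.image _)).subset
    ((fiber_iterate_subset_image hF hMsurj hb L).trans hsub)⟩

variable [MetricSpace Y]

theorem encard_fiber_le_encard_fiber (hfmin : ∀ b, Dense (range fun n => f^[n] b))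
    (hF : Semiconj Prod.fst F f) (hMsurj : SurjOn F M M) {b' : B}
    (hb' : FiberLowerSemicontinuousAt M b') (hb : ∀ n b', f^[n] b' = f^[n] b → b' = b) :
    (fiber M b').encard ≤ (fiber M b).encard := by
  refine ENat.forall_natCast_le_iff_le.1 fun k hk => ?_
  obtain ⟨T, hT, hTk⟩ := exists_subset_encard_eq hk
  obtain ⟨δ, hδ, hsep⟩ := (finite_of_encard_eq_coe hTk).exists_pos_pairwise_le_dist
  have hev : ∀ᶠ b'' in 𝓝 b', ∀ y ∈ T, ∃ z ∈ fiber M b'', dist y z < δ / 2 :=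
    (finite_of_encard_eq_coe hTk).eventually_all.2 fun y hy =>
      (hb' y (hT hy) _ (Metric.ball_mem_nhds y (half_pos hδ))).mono fun _ ⟨z, hz, hzy⟩ =>
        ⟨z, hz, by rw [dist_comm]; exact hzy⟩
  obtain ⟨U, hUp, hUo, hb'U⟩ := eventually_nhds_iff.1 hev
  obtain ⟨_, hnU, n, rfl⟩ := (hfmin b).inter_open_nonempty U hUo ⟨b', hb'U⟩
  calc (k : ℕ∞) = T.encard := hTk.symm
    _ ≤ (fiber M (f^[n] b)).encard := encard_le_encard_of_forall_exists_dist_lt hsep (hUp _ hnU)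
    _ ≤ ((fun y => (F^[n] (b, y)).2) '' fiber M b).encard :=
      encard_le_encard (fiber_iterate_subset_image hF hMsurj hb n)
    _ ≤ (fiber M b).encard := encard_image_le _ _

end SkewProduct

section Crux

variable {B Y : Type*} [MetricSpace B] [CompactSpace B] [MetricSpace Y] [CompactSpace Y]
  {f : B → B} {F : B × Y → B × Y} {M : Set (B × Y)}

theorem isMeagre_setOf_epsIsolatedPoints_nonempty (hf : Continuous f)
    (hfmin : ∀ b, Dense (range fun n => f^[n] b)) (hFc : Continuous F)
    (hF : Semiconj Prod.fst F f) (hMc : IsClosed M) (hMinv : MapsTo F M M)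
    (hMsurj : SurjOn F M M) (hMmin : ∀ p ∈ M, M ⊆ closure (range fun n => F^[n] p))
    (hinf : {b | (fiber M b).Infinite} ∈ residual B) {ε : ℝ} (hε : 0 < ε) :
    IsMeagre {b | FiberLowerSemicontinuousAt M b ∧ (epsIsolatedPoints ε (fiber M b)).Nonempty} := by
  set N : B → ℕ∞ := fun b => (epsIsolatedPoints ε (fiber M b)).encard
  by_contra hE
  obtain ⟨i, V, hVo, hV, hVN, hmeagre⟩ := exists_isOpen_le_encard_epsIsolatedPoints hMc hε hE
  set S := {b | FiberLowerSemicontinuousAt M b ∧ (fiber M b).Infinite ∧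
    ¬(FiberLowerSemicontinuousAt M b ∧ ((i + 2 : ℕ) : ℕ∞) ≤ N b)}
  have hS : S ∈ residual B := by
    filter_upwards [residual_fiberLowerSemicontinuousAt hMc, hinf, hmeagre] with b h₁ h₂ h₃
      using ⟨h₁, h₂, h₃⟩
  have hG := inter_mem (residual_forall_iterate_mem hf hfmin hS)
    (residual_forall_iterate_eq_imp_eq hf hfmin)
  -- the forward orbit of `b` never meets the meagre set where the count reaches `i + 2`
  obtain ⟨b, hbV, hbS, hbinj⟩ := (dense_of_mem_residual hG).inter_open_nonempty V hVo hV
  have hNb : N b = (i + 1 : ℕ) := by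
    refine le_antisymm (Order.le_of_lt_add_one (not_le.1 fun h => ?_)) (hVN b hbV (hbS 0).1)
    exact (hbS 0).2.2 ⟨(hbS 0).1, by exact_mod_cast h⟩
  obtain ⟨y, hy⟩ : (epsIsolatedPoints ε (fiber M b)).Nonempty :=
    one_le_encard_iff_nonempty.1 (show 1 ≤ N b by rw [hNb]; exact_mod_cast Nat.succ_pos i)
  obtain ⟨U, hUtrap, hUo, hbU⟩ := eventually_nhds_iff.1 (eventually_subsingleton_fiber_inter_ball
    hMc (hbS 0).1 hε (finite_of_encard_eq_coe hNb) hy)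
  obtain ⟨L, hL⟩ := exists_finite_fiber_iterate hFc hF hMc.isCompact hMinv hMsurj hMmin hbinj
    (hUo.inter hVo) Metric.isOpen_ball
    ⟨hy.1, ⟨hbU, hbV⟩, Metric.mem_ball_self (half_pos hε)⟩ fun n z hz w hw =>
      hUtrap _ hz.2.1.1 (hNb.trans_le (hVN _ hz.2.1.2 (hbS n).1)) ⟨hz.1, hz.2.2⟩ ⟨hw.1, hw.2.2⟩
  exact (hbS L).2.1 hL

theorem residual_preperfect_fiber (hf : Continuous f)
    (hfmin : ∀ b, Dense (range fun n => f^[n] b)) (hFc : Continuous F)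
    (hF : Semiconj Prod.fst F f) (hMc : IsClosed M) (hMinv : MapsTo F M M)
    (hMsurj : SurjOn F M M) (hMmin : ∀ p ∈ M, M ⊆ closure (range fun n => F^[n] p))
    (hinf : {b | (fiber M b).Infinite} ∈ residual B) :
    {b | Preperfect (fiber M b)} ∈ residual B := by
  have hE : IsMeagre {b | FiberLowerSemicontinuousAt M b ∧
      ∃ k : ℕ, (epsIsolatedPoints (1 / (k + 1)) (fiber M b)).Nonempty} :=
    (isMeagre_iUnion fun k : ℕ => isMeagre_setOf_epsIsolatedPoints_nonempty hf hfmin hFc hF hMc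
      hMinv hMsurj hMmin hinf Nat.one_div_pos_of_nat).mono <| by
      rintro b ⟨hb, k, hk⟩
      exact mem_iUnion.2 ⟨k, hb, hk⟩
  filter_upwards [residual_fiberLowerSemicontinuousAt hMc, hE] with b hb hbE
  refine preperfect_iff_nhds.2 fun y hy U hU => ?_
  obtain ⟨r, hr, hrU⟩ := Metric.mem_nhds_iff.1 hU
  obtain ⟨k, hk⟩ := exists_nat_one_div_lt hr
  by_contra! h
  exact hbE ⟨hb, k, y, hy, fun z hz hzy => h z ⟨hrU (hzy.trans hk), hz⟩⟩

end Crux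

theorem AddCircle.isTotallyDisconnected_of_interior_eq_empty {p : ℝ} [Fact (0 < p)]
    {s : Set (AddCircle p)} (hs : interior s = ∅) : IsTotallyDisconnected s := by
  intro C hCs hC u hu v hv
  by_contra huv
  obtain ⟨a, ha⟩ : ∃ a : ℝ, (a : AddCircle p) ∉ s := by
    by_contra! h
    have : s = univ := eq_univ_of_forall fun x => QuotientAddGroup.induction_on x h
    simp [this] at hs
  let e := AddCircle.openPartialHomeomorphCoe p a
  have hCt : C ⊆ e.target := fun x hx hxa => ha (hxa ▸ hCs hx)
  have hIcc := (hC.image _ (e.continuousOn_symm.mono hCt)).ordConnected.uIcc_subset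
    (mem_image_of_mem _ hu) (mem_image_of_mem _ hv)
  have hlt : e.symm u ⊓ e.symm v < e.symm u ⊔ e.symm v := inf_lt_sup.2 fun h =>
    huv (by rw [← e.right_inv (hCt hu), h, e.right_inv (hCt hv)])
  have hsub : ((↑) '' Ioo (e.symm u ⊓ e.symm v) (e.symm u ⊔ e.symm v) : Set (AddCircle p)) ⊆
      interior s := by
    refine interior_maximal ?_ (QuotientAddGroup.isOpenMap_coe _ isOpen_Ioo)
    rintro _ ⟨t, ht, rfl⟩
    obtain ⟨c, hc, hct⟩ := hIcc (Ioo_subset_Icc_self ht)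
    have hec : ((e.symm c : ℝ) : AddCircle p) = c := e.right_inv (hCt hc)
    rw [← hct, hec]
    exact hCs hc
  rw [hs] at hsub
  exact hsub ⟨_, (nonempty_Ioo.2 hlt).some_mem, rfl⟩

theorem typical_fibre_of_nowhere_dense_minimal_set_cantor_or_finite_general
    {B : Type*} [MetricSpace B] [CompactSpace B]
    (f : B → B) (hf : Continuous f)
    (hfmin : ∀ b : B, Dense (Set.range fun n => f^[n] b))
    (g : B × AddCircle (1 : ℝ) → AddCircle (1 : ℝ)) (hg : Continuous g)
    (F : B × AddCircle (1 : ℝ) → B × AddCircle (1 : ℝ)) (hF : ∀ p, F p = (f p.1, g p))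
    (M : Set (B × AddCircle (1 : ℝ))) (hMne : M.Nonempty) (hMcl : IsClosed M)
    (hMinv : Set.MapsTo F M M)
    (hMmin : ∀ p ∈ M, M ⊆ closure (Set.range fun n => F^[n] p))
    (hND : IsNowhereDense M) :
    (∃ R ∈ residual B, ∀ b ∈ R,
        {y : AddCircle (1 : ℝ) | (b, y) ∈ M}.Nonempty ∧
        Perfect {y : AddCircle (1 : ℝ) | (b, y) ∈ M} ∧
        IsTotallyDisconnected {y : AddCircle (1 : ℝ) | (b, y) ∈ M}) ∨
    (∃ N : ℕ, 0 < N ∧ ∃ R ∈ residual B, ∀ b ∈ R,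
        {y : AddCircle (1 : ℝ) | (b, y) ∈ M}.ncard = N ∧
        {y : AddCircle (1 : ℝ) | (b, y) ∈ M}.Finite) := by
  have hFc : Continuous F := (funext hF : F = _) ▸ (hf.comp continuous_fst).prodMk hg
  have hFf : Semiconj Prod.fst F f := fun p => by rw [hF]
  have hMsurj : SurjOn F M M :=
    surjOn_of_subset_closure_range_iterate hFc hMcl.isCompact hMinv hMmin
  have hne := fiber_nonempty_of_dense_range_iterate hfmin hFf hMne hMcl hMinv
  set G := {b | FiberLowerSemicontinuousAt M b ∧ ∀ n b', f^[n] b' = f^[n] b → b' = b}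
  have hG : G ∈ residual B :=
    inter_mem (residual_fiberLowerSemicontinuousAt hMcl)
      (residual_forall_iterate_eq_imp_eq hf hfmin)
  have hGeq : ∀ b ∈ G, ∀ b' ∈ G, (fiber M b).encard = (fiber M b').encard :=
    fun b hb b' hb' => le_antisymm (encard_fiber_le_encard_fiber hfmin hFf hMsurj hb.1 hb'.2)
      (encard_fiber_le_encard_fiber hfmin hFf hMsurj hb'.1 hb.2)
  by_cases hfin : ∃ b₀ ∈ G, (fiber M b₀).Finite
  · obtain ⟨b₀, hb₀, hfin₀⟩ := hfin
    refine Or.inr ⟨_, (ncard_pos hfin₀).2 (hne b₀), G, hG, fun b hb => ?_⟩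
    have hb := hGeq b hb b₀ hb₀
    exact ⟨by rw [ncard_def, ncard_def, ← hb]; rfl,
      encard_ne_top_iff.1 (hb ▸ hfin₀.encard_lt_top.ne)⟩
  · push Not at hfin
    have hperf := residual_preperfect_fiber hf hfmin hFc hFf hMcl hMinv hMsurj hMmin
      (mem_of_superset hG hfin)
    refine Or.inl ⟨_, inter_mem hperf (residual_interior_fiber_eq_empty hMcl hND),
      fun b hb => ⟨hne b, ⟨hMcl.fiber b, hb.1⟩,
        AddCircle.isTotallyDisconnected_of_interior_eq_empty hb.2⟩⟩

/-- If a minimal set `M` of a skew product on `B × S¹` over a minimal base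
is nowhere dense, then either a typical fibre of `M` is a Cantor set, or there is a
positive integer `N` such that a typical fibre of `M` has exactly `N` elements. -/
theorem typical_fibre_of_nowhere_dense_minimal_set_cantor_or_finite
    {B : Type*} [MetricSpace B] [CompactSpace B] [Nonempty B]
    (f : B → B) (hf : Continuous f)
    (hfmin : ∀ b : B, Dense (Set.range fun n => f^[n] b))
    (g : B × AddCircle (1 : ℝ) → AddCircle (1 : ℝ)) (hg : Continuous g)
    (F : B × AddCircle (1 : ℝ) → B × AddCircle (1 : ℝ)) (hF : ∀ p, F p = (f p.1, g p))
    (M : Set (B × AddCircle (1 : ℝ))) (hMne : M.Nonempty) (hMcl : IsClosed M)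
    (hMinv : Set.MapsTo F M M)
    (hMmin : ∀ p ∈ M, M ⊆ closure (Set.range fun n => F^[n] p))
    (hND : IsNowhereDense M) :
    (∃ R ∈ residual B, ∀ b ∈ R,
        {y : AddCircle (1 : ℝ) | (b, y) ∈ M}.Nonempty ∧
        Perfect {y : AddCircle (1 : ℝ) | (b, y) ∈ M} ∧
        IsTotallyDisconnected {y : AddCircle (1 : ℝ) | (b, y) ∈ M}) ∨
    (∃ N : ℕ, 0 < N ∧ ∃ R ∈ residual B, ∀ b ∈ R,
        {y : AddCircle (1 : ℝ) | (b, y) ∈ M}.ncard = N ∧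
        {y : AddCircle (1 : ℝ) | (b, y) ∈ M}.Finite) :=
  typical_fibre_of_nowhere_dense_minimal_set_cantor_or_finite_general f hf hfmin g hg F hF M hMne
    hMcl hMinv hMmin hND
end

section
/- Let B be a nonempty compact metric space and f : B → B a continuous minimal map. Then there exists an irrational real number α such that the direct product map F : B × (ℝ/ℤ) → B × (ℝ/ℤ) defined by F(b, y) = (f(b), y + α mod 1) is minimal. -/
/-!
Call `θ ∈ ℝ/ℤ` an eigenvalue of `f` if some continuous `g : B → ℝ/ℤ` satisfies
`g ∘ f = g + θ`. After composing with `y ↦ exp (2πiy)`, eigenfunctions of distinct eigenvalues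
are `1/2` apart in the separable space `C(B, ℂ)`, so there are only countably many eigenvalues,
and we may pick an irrational `α` none of whose nonzero multiples `nα` is an eigenvalue.

Let `M` be a minimal set of `F = f × (· + α)`. Vertical translations commute with `F`, so they
map `M` to minimal sets, which either equal `M` or are disjoint from it. Hence the fibres of `M`
over `B` (all nonempty, `f` being minimal) are cosets of the closed subgroup `H` of translations
preserving `M`. If `H` is the whole circle then `M` is everything; otherwise `H` is finite, so
`n • H = 0` for some `n ≠ 0`, and `x ↦ n • y` for `(x, y) ∈ M` is a continuous eigenfunction
with eigenvalue `nα`, a contradiction.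
-/

open Set Topology Function

section MinimalSets

variable {X : Type*} [TopologicalSpace X] {F : X → X}

def IsNonemptyClosedInvariant (F : X → X) (s : Set X) : Prop :=
  s.Nonempty ∧ IsClosed s ∧ MapsTo F s s

theorem forall_dense_orbit_iff (hF : Continuous F) :
    (∀ x, Dense (range fun n => F^[n] x)) ↔ ∀ s, IsNonemptyClosedInvariant F s → s = univ := by
  constructor
  · rintro hdense s ⟨⟨x, hx⟩, hs, hFs⟩
    have horbit : (range fun n => F^[n] x) ⊆ s := by
      rintro _ ⟨n, rfl⟩
      exact hFs.iterate n hx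
    exact eq_univ_of_univ_subset <| (hdense x).closure_eq ▸ hs.closure_subset_iff.mpr horbit
  · intro hmin x
    have horbit : MapsTo F (range fun n => F^[n] x) (range fun n => F^[n] x) := by
      rintro _ ⟨n, rfl⟩
      exact ⟨n + 1, iterate_succ_apply' F n x⟩
    refine dense_iff_closure_eq.mpr (hmin _ ⟨?_, isClosed_closure, horbit.closure hF⟩)
    exact ⟨x, subset_closure ⟨0, rfl⟩⟩

theorem IsNonemptyClosedInvariant.exists_minimal_subset [CompactSpace X] {s : Set X}
    (hs : IsNonemptyClosedInvariant F s) :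
    ∃ M ⊆ s, Minimal (IsNonemptyClosedInvariant F) M := by
  refine zorn_superset_nonempty {t | IsNonemptyClosedInvariant F t} ?_ s hs
  intro c hc hchain hcne
  have : Nonempty c := hcne.to_subtype
  refine ⟨⋂₀ c, ⟨?_, isClosed_sInter fun t ht => (hc ht).2.1, ?_⟩,
    fun t ht => sInter_subset_of_mem ht⟩
  · exact IsCompact.nonempty_sInter_of_directed_nonempty_isCompact_isClosed
      (fun t ht u hu => (hchain.total ht hu).elim (fun htu => ⟨t, ht, le_rfl, htu⟩)
        fun hut => ⟨u, hu, hut, le_rfl⟩)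
      (fun t ht => (hc ht).1) (fun t ht => (hc ht).2.1.isCompact) fun t ht => (hc ht).2.1
  · exact mapsTo_sInter.mpr fun t ht => (hc ht).2.2.mono_left (sInter_subset_of_mem ht)

theorem Minimal.image_homeomorph_of_commute {M : Set X}
    (hM : Minimal (IsNonemptyClosedInvariant F) M) (h : X ≃ₜ X) (hcomm : Function.Commute h F) :
    Minimal (IsNonemptyClosedInvariant F) (h '' M) := by
  obtain ⟨⟨hne, hcl, hinv⟩, hmin⟩ := hM
  refine ⟨⟨hne.image h, h.isClosedMap _ hcl, ?_⟩, fun N hN hNM => ?_⟩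
  · rintro _ ⟨q, hq, rfl⟩
    exact ⟨F q, hinv hq, hcomm q⟩
  · have hpre : IsNonemptyClosedInvariant F (h.symm '' N) := by
      refine ⟨hN.1.image _, h.symm.isClosedMap _ hN.2.1, ?_⟩
      rintro _ ⟨q, hq, rfl⟩
      refine ⟨F q, hN.2.2 hq, ?_⟩
      rw [h.symm_apply_eq, hcomm, h.apply_symm_apply]
    have := hmin hpre (by simpa [h.image_symm] using image_mono (f := h.symm) hNM)
    simpa [h.image_symm] using image_mono (f := h) this

theorem Minimal.eq_of_inter_nonempty {M M' : Set X}
    (hM : Minimal (IsNonemptyClosedInvariant F) M) (hM' : Minimal (IsNonemptyClosedInvariant F) M')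
    (hMM' : (M ∩ M').Nonempty) : M = M' := by
  have hinter : IsNonemptyClosedInvariant F (M ∩ M') :=
    ⟨hMM', hM.prop.2.1.inter hM'.prop.2.1, hM.prop.2.2.inter_inter hM'.prop.2.2⟩
  exact (hM.eq_of_subset hinter inter_subset_left).symm.trans
    (hM'.eq_of_subset hinter inter_subset_right)

end MinimalSets

namespace AddCircle

theorem countable_preimage_coe {p : ℝ} {E : Set (AddCircle p)} (hE : E.Countable) :
    (((↑) : ℝ → AddCircle p) ⁻¹' E).Countable := by
  rw [← biUnion_preimage_singleton]
  refine hE.biUnion fun θ _ => ?_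
  obtain ⟨r, rfl⟩ := QuotientAddGroup.mk_surjective θ
  refine (countable_range fun m : ℤ => r + m • p).mono fun α hα => ?_
  obtain ⟨m, hm⟩ := (coe_eq_zero_iff p).mp <| (coe_sub p α r).trans (sub_eq_zero.mpr hα)
  exact ⟨m, by simp only [hm, add_sub_cancel]⟩

theorem exists_irrational_forall_nsmul_notMem {p : ℝ} {E : Set (AddCircle p)} (hE : E.Countable) :
    ∃ α : ℝ, Irrational α ∧ ∀ n : ℕ, n ≠ 0 → n • (α : AddCircle p) ∉ E := by
  set bad : Set ℝ := range ((↑) : ℚ → ℝ) ∪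
    ⋃ n : ℕ, ⋃ _ : n ≠ 0, (fun α : ℝ => (n : ℝ) * α) ⁻¹' (((↑) : ℝ → AddCircle p) ⁻¹' E)
  have hbad : bad.Countable := (countable_range _).union <| countable_iUnion fun n =>
    countable_iUnion fun hn =>
      (countable_preimage_coe hE).preimage (mul_right_injective₀ (by exact_mod_cast hn))
  obtain ⟨α, hα⟩ := (hbad.dense_compl ℝ).nonempty
  refine ⟨α, fun hrat => hα (Or.inl hrat), fun n hn hmem => hα (Or.inr ?_)⟩
  refine mem_iUnion₂.mpr ⟨n, hn, ?_⟩
  simpa [mem_preimage, ← nsmul_eq_mul, coe_nsmul] using hmem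

theorem exists_nsmul_eq_zero_of_isClosed_ne_top {p : ℝ} [Fact (0 < p)]
    {H : AddSubgroup (AddCircle p)}
    (hH : IsClosed (H : Set (AddCircle p))) (hne : H ≠ ⊤) :
    ∃ n : ℕ, n ≠ 0 ∧ ∀ h ∈ H, n • h = 0 := by
  have hnd : ¬Dense (H : Set (AddCircle p)) := fun hd =>
    hne (SetLike.coe_injective (hd.closure_eq ▸ hH.closure_eq).symm)
  obtain ⟨a, ha, rfl⟩ : ∃ a, addOrderOf a ≠ 0 ∧ H = .zmultiples a := by
    simpa [dense_addSubgroup_iff_ne_zmultiples] using hnd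
  refine ⟨addOrderOf a, ha, ?_⟩
  rintro _ ⟨k, rfl⟩
  rw [smul_comm, addOrderOf_nsmul_eq_zero, smul_zero]

end AddCircle

local notation "𝕋" => AddCircle (1 : ℝ)

theorem Complex.exists_re_pow_mul_le_half {ν w : ℂ} (hν : ‖ν‖ = 1) (hν1 : ν ≠ 1) (hw : ‖w‖ ≤ 1) :
    ∃ n : ℕ, (ν ^ n * w).re ≤ 1 / 2 := by
  by_contra! h
  have hd : 0 < ‖ν - 1‖ := norm_pos_iff.mpr (sub_ne_zero.mpr hν1)
  obtain ⟨m, hm⟩ := exists_nat_gt (4 / ‖ν - 1‖)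
  have hlower : (m : ℝ) / 2 ≤ (∑ i ∈ Finset.range m, ν ^ i * w).re := by
    rw [Complex.re_sum]
    calc (m : ℝ) / 2 = ∑ _i ∈ Finset.range m, (1 / 2 : ℝ) := by simp [div_eq_mul_inv]
      _ ≤ _ := Finset.sum_le_sum fun i _ => (h i).le
  have hupper : ‖∑ i ∈ Finset.range m, ν ^ i * w‖ ≤ 2 / ‖ν - 1‖ := by
    rw [← Finset.sum_mul, geom_sum_eq hν1, norm_mul, norm_div]
    calc ‖ν ^ m - 1‖ / ‖ν - 1‖ * ‖w‖ ≤ (‖ν ^ m‖ + ‖(1 : ℂ)‖) / ‖ν - 1‖ * 1 := by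
          gcongr; exact norm_sub_le _ _
      _ = 2 / ‖ν - 1‖ := by rw [norm_pow, hν]; norm_num
  have hm2 := hlower.trans ((Complex.re_le_norm _).trans hupper)
  rw [div_lt_iff₀ hd] at hm
  rw [div_le_div_iff₀ two_pos hd] at hm2
  linarith

theorem AddCircle.one_sub_re_toCircle_sub_le {p : ℝ} (a b : AddCircle p) :
    1 - (toCircle (a - b) : ℂ).re ≤ ‖(toCircle a : ℂ) - toCircle b‖ := by
  have hab : (toCircle a : ℂ) - toCircle b = (toCircle (a - b) - 1) * toCircle b := by
    rw [sub_mul, one_mul, ← Circle.coe_mul, ← toCircle_add, sub_add_cancel]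
  rw [hab, norm_mul, Circle.norm_coe, mul_one, ← norm_neg, neg_sub]
  simpa using Complex.re_le_norm (1 - (toCircle (a - b) : ℂ))

def circleEigenvalues {B : Type*} [TopologicalSpace B] (f : B → B) : Set 𝕋 :=
  {θ | ∃ g : C(B, 𝕋), ∀ x, g (f x) = g x + θ}

theorem exists_re_toCircle_le_half {B : Type*} [Nonempty B] {f : B → B} {d : B → 𝕋} {δ : 𝕋}
    (hδ : δ ≠ 0) (hd : Semiconj d f (· + δ)) :
    ∃ x, (AddCircle.toCircle (d x) : ℂ).re ≤ 1 / 2 := by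
  obtain ⟨x₀⟩ := ‹Nonempty B›
  have hν1 : AddCircle.toCircle δ ≠ 1 := fun h =>
    hδ (AddCircle.injective_toCircle one_ne_zero (h.trans AddCircle.toCircle_zero.symm))
  obtain ⟨n, hn⟩ := Complex.exists_re_pow_mul_le_half (Circle.norm_coe (AddCircle.toCircle δ))
    (Circle.coe_eq_one.not.mpr hν1) (Circle.norm_coe (AddCircle.toCircle (d x₀))).le
  refine ⟨f^[n] x₀, ?_⟩
  rwa [hd.iterate_right n x₀, add_right_iterate_apply, AddCircle.toCircle_add,
    AddCircle.toCircle_nsmul, Circle.coe_mul, Circle.coe_pow, mul_comm]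

theorem countable_circleEigenvalues {B : Type*} [MetricSpace B] [CompactSpace B] [Nonempty B]
    (f : B → B) : (circleEigenvalues f).Countable := by
  choose! g hg using fun θ (hθ : θ ∈ circleEigenvalues f) => hθ
  let ψ : 𝕋 → C(B, ℂ) := fun θ => ⟨fun x => AddCircle.toCircle (g θ x), by fun_prop⟩
  have hsep : ∀ θ ∈ circleEigenvalues f, ∀ θ' ∈ circleEigenvalues f, θ ≠ θ' →
      1 / 2 ≤ dist (ψ θ) (ψ θ') := by
    intro θ hθ θ' hθ' hne
    obtain ⟨x, hx⟩ := exists_re_toCircle_le_half (f := f)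
      (d := fun x => g θ x - g θ' x) (sub_ne_zero.mpr hne)
      fun x => by simp only [hg θ hθ, hg θ' hθ']; abel
    calc 1 / 2 ≤ 1 - (AddCircle.toCircle (g θ x - g θ' x) : ℂ).re := by linarith
      _ ≤ ‖ψ θ x - ψ θ' x‖ := AddCircle.one_sub_re_toCircle_sub_le _ _
      _ ≤ dist (ψ θ) (ψ θ') := by rw [← dist_eq_norm]; exact ContinuousMap.dist_apply_le_dist x
  refine PairwiseDisjoint.countable_of_isOpen (s := fun θ => Metric.ball (ψ θ) (1 / 4))
    (fun θ hθ θ' hθ' hne => Metric.ball_disjoint_ball ?_) (fun _ _ => Metric.isOpen_ball)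
    fun θ _ => ⟨ψ θ, Metric.mem_ball_self (by norm_num)⟩
  linarith [hsep θ hθ θ' hθ' hne]

section ProductWithRotation

variable {B : Type*}

def verticalStabilizer (M : Set (B × 𝕋)) : AddSubgroup 𝕋 where
  carrier := {β | ∀ x y, (x, y) ∈ M ↔ (x, y + β) ∈ M}
  zero_mem' := by simp
  add_mem' {β γ} hβ hγ x y := (hβ x y).trans (by rw [← add_assoc]; exact hγ x _)
  neg_mem' {β} hβ x y := by simpa using (hβ x (y + -β)).symm

theorem eq_univ_of_verticalStabilizer_eq_top {M : Set (B × 𝕋)} (hproj : Prod.fst '' M = univ)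
    (htop : verticalStabilizer M = ⊤) : M = univ := by
  refine eq_univ_of_forall fun ⟨x, z⟩ => ?_
  obtain ⟨⟨x, y⟩, hy, rfl⟩ := hproj.symm ▸ mem_univ x
  simpa using (htop ▸ AddSubgroup.mem_top (z - y) : z - y ∈ verticalStabilizer M) x y |>.mp hy

variable [TopologicalSpace B] {f : B → B} {a : 𝕋} {M : Set (B × 𝕋)}

theorem sub_mem_verticalStabilizer (hM : Minimal (IsNonemptyClosedInvariant (Prod.map f (· + a))) M)
    {x : B} {y y' : 𝕋} (hy : (x, y) ∈ M) (hy' : (x, y') ∈ M) :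
    y' - y ∈ verticalStabilizer M := by
  set h := (Homeomorph.refl B).prodCongr (Homeomorph.addRight (y' - y))
  have hcomm : Function.Commute h (Prod.map f (· + a)) := fun q =>
    Prod.ext rfl (add_right_comm _ _ _)
  have hhM : h '' M = M := (hM.image_homeomorph_of_commute h hcomm).eq_of_inter_nonempty hM
    ⟨(x, y'), ⟨(x, y), hy, by simp [h]⟩, hy'⟩
  intro x' z
  rw [← h.injective.mem_set_image, hhM]
  rfl

theorem isClosed_verticalStabilizer
    (hM : Minimal (IsNonemptyClosedInvariant (Prod.map f (· + a))) M) :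
    IsClosed (verticalStabilizer M : Set 𝕋) := by
  have heq : (verticalStabilizer M : Set 𝕋) = ⋂ q ∈ M, (fun β => (q.1, q.2 + β)) ⁻¹' M := by
    ext β
    simp only [mem_iInter₂, mem_preimage, SetLike.mem_coe]
    refine ⟨fun hβ q hq => (hβ q.1 q.2).mp hq, fun hβ => ?_⟩
    obtain ⟨q, hq⟩ := hM.prop.1
    simpa using sub_mem_verticalStabilizer hM hq (hβ q hq)
  rw [heq]
  exact isClosed_biInter fun q _ => hM.prop.2.1.preimage (by fun_prop)

variable [CompactSpace B] [T2Space B]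

theorem IsNonemptyClosedInvariant.fst_image_eq_univ
    (hM : IsNonemptyClosedInvariant (Prod.map f (· + a)) M)
    (hfmin : ∀ s, IsNonemptyClosedInvariant f s → s = univ) : Prod.fst '' M = univ := by
  refine hfmin _ ⟨hM.1.image _, (hM.2.1.isCompact.image continuous_fst).isClosed, ?_⟩
  rintro _ ⟨q, hq, rfl⟩
  exact ⟨_, hM.2.2 hq, rfl⟩

theorem nsmul_mem_circleEigenvalues
    (hM : Minimal (IsNonemptyClosedInvariant (Prod.map f (· + a))) M)
    (hproj : Prod.fst '' M = univ) {n : ℕ} (hn : ∀ β ∈ verticalStabilizer M, n • β = 0) :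
    n • a ∈ circleEigenvalues f := by
  have : CompactSpace M := isCompact_iff_compactSpace.mp hM.prop.2.1.isCompact
  let π : C(M, B) := ⟨fun q => q.1.1, by fun_prop⟩
  have hπ : IsQuotientMap π := by
    refine IsClosedMap.isQuotientMap π.continuous.isClosedMap π.continuous fun x => ?_
    obtain ⟨q, hq, rfl⟩ := hproj.symm ▸ mem_univ x
    exact ⟨⟨q, hq⟩, rfl⟩
  let G : C(M, 𝕋) := ⟨fun q => n • q.1.2, by fun_prop⟩
  have hG : FactorsThrough G π := by
    rintro ⟨⟨x, y⟩, hy⟩ ⟨⟨x', y'⟩, hy'⟩ (rfl : x = x')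
    simpa [G, sub_eq_zero, nsmul_sub, eq_comm] using hn _ (sub_mem_verticalStabilizer hM hy hy')
  have hg : ∀ q ∈ M, hπ.lift G hG q.1 = n • q.2 := fun q hq =>
    DFunLike.congr_fun (hπ.lift_comp G hG) ⟨q, hq⟩
  refine ⟨hπ.lift G hG, fun x => ?_⟩
  obtain ⟨⟨x, y⟩, hy, rfl⟩ := hproj.symm ▸ mem_univ x
  rw [hg _ hy, show f x = (Prod.map f (· + a) (x, y)).1 from rfl, hg _ (hM.prop.2.2 hy)]
  simp

theorem dense_orbit_prodMap_add_of_forall_nsmul_notMem (hf : Continuous f)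
    (hfmin : ∀ b, Dense (range fun n => f^[n] b))
    (ha : ∀ n : ℕ, n ≠ 0 → n • a ∉ circleEigenvalues f) (p : B × 𝕋) :
    Dense (range fun n => (Prod.map f (· + a))^[n] p) := by
  refine (forall_dense_orbit_iff (hf.prodMap (continuous_add_const a))).mpr (fun s hs => ?_) p
  obtain ⟨M, hMs, hM⟩ := hs.exists_minimal_subset
  have hproj := hM.prop.fst_image_eq_univ ((forall_dense_orbit_iff hf).mp hfmin)
  suffices M = univ from eq_univ_of_univ_subset (this ▸ hMs)
  by_contra hne
  obtain ⟨n, hn, hker⟩ := AddCircle.exists_nsmul_eq_zero_of_isClosed_ne_top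
    (isClosed_verticalStabilizer hM) fun htop =>
      hne (eq_univ_of_verticalStabilizer_eq_top hproj htop)
  exact ha n hn (nsmul_mem_circleEigenvalues hM hproj hker)

end ProductWithRotation

/-- For every minimal map `f` of a nonempty compact metric space `B` there is
an irrational `α` such that the direct product of `f` with the rotation of the circle
`ℝ/ℤ` by `α` is minimal. -/
theorem exists_irrational_rotation_product_minimal
    {B : Type*} [MetricSpace B] [CompactSpace B] [Nonempty B]
    (f : B → B) (hf : Continuous f)
    (hfmin : ∀ b : B, Dense (Set.range fun n => f^[n] b)) :
    ∃ α : ℝ, Irrational α ∧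
      ∀ p : B × AddCircle (1 : ℝ),
        Dense (Set.range fun n =>
          (fun q : B × AddCircle (1 : ℝ) => (f q.1, q.2 + (α : AddCircle (1 : ℝ))))^[n] p) := by
  obtain ⟨α, hα, hgood⟩ :=
    AddCircle.exists_irrational_forall_nsmul_notMem (countable_circleEigenvalues f)
  exact ⟨α, hα, dense_orbit_prodMap_add_of_forall_nsmul_notMem hf hfmin hgood⟩
end

section
/- For every strictly increasing sequence (n_k)_{k≥1} of positive integers there exists a real number α such that, for every point s of the circle ℝ/ℤ, the set {s + n_k·α mod 1 : k ≥ 1} is dense in ℝ/ℤ (i.e. the rotation of the circle by α is minimal with respect to the sequence (n_k)). -/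
/-! Baire category. For a nonempty open `U` of the circle, the set of `α` with `n_k α ∈ U` for
some `k` is open, and it is dense: as `α` moves through an interval of length `1 / n_k`, the point
`n_k α` runs once around the circle, and `1 / n_k → 0`. Intersecting these sets over a countable
basis leaves an `α` whose orbit `(n_k α)` is dense, and translating by `s` preserves density. -/

open Set TopologicalSpace

theorem exists_denseRange_of_dense_iUnion_preimage {ι X Y : Type*} [TopologicalSpace X]
    [BaireSpace X] [Nonempty X] [TopologicalSpace Y] [SecondCountableTopology Y]
    {f : ι → X → Y} (hf : ∀ i, Continuous (f i))
    (hdense : ∀ U : Set Y, U.Nonempty → Dense (⋃ i, f i ⁻¹' U)) :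
    ∃ x, DenseRange fun i => f i x := by
  have hG : Dense (⋂ U ∈ countableBasis Y, ⋃ i, f i ⁻¹' U) :=
    dense_biInter_of_isOpen
      (fun U hU => isOpen_iUnion fun i => (isOpen_of_mem_countableBasis hU).preimage (hf i))
      (countable_countableBasis Y)
      (fun U hU => hdense U (nonempty_of_mem_countableBasis hU))
  obtain ⟨x, hx⟩ := hG.nonempty
  refine ⟨x, (isBasis_countableBasis Y).dense_iff.2 fun U hU _ => ?_⟩
  obtain ⟨i, hi⟩ := mem_iUnion.1 (mem_iInter₂.1 hx U hU)
  exact ⟨f i x, hi, mem_range_self i⟩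

namespace AddCircle

variable {p : ℝ}

theorem exists_abs_sub_le_and_coe_mul_eq (hp : 0 < p) {m : ℝ} (hm : 0 < m) (x : ℝ)
    (u : AddCircle p) : ∃ α : ℝ, |α - x| ≤ p / (2 * m) ∧ ((m * α : ℝ) : AddCircle p) = u := by
  obtain ⟨t, rfl⟩ := QuotientAddGroup.mk_surjective u
  set y := (m * x - t) / p
  refine ⟨(t + round y * p) / m, ?_, ?_⟩
  · have hdist : (t + round y * p) / m - x = -(p / m) * (y - round y) := by
      simp only [y]; field_simp; ring
    calc |(t + round y * p) / m - x| = p / m * |y - round y| := by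
          rw [hdist, abs_mul, abs_neg, abs_of_pos (div_pos hp hm)]
      _ ≤ p / m * (1 / 2) := by gcongr; exact abs_sub_round y
      _ = p / (2 * m) := by ring
  · rw [mul_div_cancel₀ _ hm.ne', coe_add, ← zsmul_eq_mul, coe_zsmul, coe_period, smul_zero,
      add_zero]

theorem dense_setOf_exists_coe_mul_eq (hp : 0 < p) {ι : Type*} {n : ι → ℕ}
    (hn : ∀ N : ℕ, ∃ i, N < n i) (u : AddCircle p) :
    Dense {α : ℝ | ∃ i, ((n i * α : ℝ) : AddCircle p) = u} := by
  refine Metric.dense_iff.2 fun x r hr => ?_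
  obtain ⟨i, hi⟩ := hn ⌈p / (2 * r)⌉₊
  have hlarge : p / (2 * r) < n i := (Nat.le_ceil _).trans_lt (by exact_mod_cast hi)
  have hni : (0 : ℝ) < n i := (div_pos hp (by positivity)).trans hlarge
  obtain ⟨α, hαx, hα⟩ := exists_abs_sub_le_and_coe_mul_eq hp hni x u
  refine ⟨α, ?_, i, hα⟩
  rw [Metric.mem_ball, Real.dist_eq]
  calc |α - x| ≤ p / (2 * n i) := hαx
    _ < r := by rw [div_lt_iff₀ (by positivity)] at hlarge ⊢; linarith

end AddCircle

theorem exists_rotation_minimal_wrt_sequence_general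
    (n : ℕ → ℕ) (hmono : StrictMono n) :
    ∃ α : ℝ, ∀ s : AddCircle (1 : ℝ),
      Dense (Set.range fun k : ℕ => s + (((n k : ℝ) * α : ℝ) : AddCircle (1 : ℝ))) := by
  have hunbounded : ∀ N : ℕ, ∃ k, N < n k := fun N => ⟨N + 1, hmono.le_apply⟩
  let rotate (k : ℕ) (α : ℝ) : AddCircle (1 : ℝ) := ((n k * α : ℝ) : AddCircle (1 : ℝ))
  have hhit (U : Set (AddCircle (1 : ℝ))) (hU : U.Nonempty) : Dense (⋃ k, rotate k ⁻¹' U) := by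
    obtain ⟨u, hu⟩ := hU
    refine (AddCircle.dense_setOf_exists_coe_mul_eq one_pos hunbounded u).mono ?_
    rintro β ⟨k, hk⟩
    exact mem_iUnion.2 ⟨k, show rotate k β ∈ U from mem_of_eq_of_mem hk hu⟩
  obtain ⟨α, hα⟩ := exists_denseRange_of_dense_iUnion_preimage
    (fun k => (AddCircle.continuous_mk' 1).comp (continuous_const_mul _)) hhit
  exact ⟨α, fun s =>
    (Homeomorph.addLeft s).surjective.denseRange.comp hα (continuous_const_add s)⟩

/-- For every strictly increasing sequence of positive integers `(n_k)` there
is `α ∈ ℝ` such that the rotation of the circle `ℝ/ℤ` by `α` is minimal with respect to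
`(n_k)`: for every `s` the set `{s + n_k·α mod 1 : k}` is dense in `ℝ/ℤ`. -/
theorem exists_rotation_minimal_wrt_sequence
    (n : ℕ → ℕ) (hmono : StrictMono n) (hpos : ∀ k, 0 < n k) :
    ∃ α : ℝ, ∀ s : AddCircle (1 : ℝ),
      Dense (Set.range fun k : ℕ => s + (((n k : ℝ) * α : ℝ) : AddCircle (1 : ℝ))) :=
  exists_rotation_minimal_wrt_sequence_general n hmono
end

section
/- Let B be a compact metric space, S¹ = ℝ/ℤ the circle, and let M be a closed subset of B × S¹ that is nowhere dense in B × S¹. Then the set {b ∈ B : the fibre M_b = {y ∈ S¹ : (b, y) ∈ M} is totally disconnected} is residual in B; in other words, a typical fibre of M is totally disconnected. -/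
/-!
A connected subset of the circle with two points contains an arc, so a fibre with empty
interior is totally disconnected. The fibres with nonempty interior lie over the countably many
sets `{b | {b} × U ⊆ closure M}`, `U` a nonempty basic open set; each is closed, and has empty
interior because `interior (closure M) = ∅`.
-/

open Set Topology TopologicalSpace

namespace AddCircle

variable {p : ℝ} [Fact (0 < p)]

theorem interior_nonempty_of_isPreconnected {C : Set (AddCircle p)} (hC : IsPreconnected C)
    (hC_nt : C.Nontrivial) : (interior C).Nonempty := by
  rcases eq_or_ne C univ with rfl | hC_ne
  · simp
  obtain ⟨z, hz⟩ := (ne_univ_iff_exists_notMem C).mp hC_ne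
  obtain ⟨x, rfl⟩ := QuotientAddGroup.mk_surjective z
  -- `e` identifies the complement of `↑x` with the interval `(x, x + p)`
  set e := openPartialHomeomorphCoe p x
  have hC_target : C ⊆ e.target := fun c hc (hcx : c = x) => hz (hcx ▸ hc)
  have hD : IsPreconnected (e.symm '' C) := hC.image _ (e.continuousOn_symm.mono hC_target)
  obtain ⟨u, hu, v, hv, huv⟩ := (hC_nt.image_of_injOn (e.symm.injOn.mono hC_target)).exists_lt
  have hIoo : ((↑) : ℝ → AddCircle p) '' Ioo u v ⊆ C :=
    calc ((↑) : ℝ → AddCircle p) '' Ioo u v ⊆ e '' (e.symm '' C) :=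
          image_mono (Ioo_subset_Icc_self.trans (hD.Icc_subset hu hv))
      _ = C := e.image_symm_image_of_subset_target hC_target
  exact ((nonempty_Ioo.2 huv).image _).mono
    (interior_maximal hIoo (QuotientAddGroup.isOpenMap_coe _ isOpen_Ioo))

theorem isTotallyDisconnected_of_interior_eq_empty_s8 {s : Set (AddCircle p)}
    (hs : interior s = ∅) : IsTotallyDisconnected s := fun _ hts ht =>
  not_nontrivial_iff.mp fun ht_nt =>
    (interior_nonempty_of_isPreconnected ht ht_nt).ne_empty
      (subset_empty_iff.mp (hs ▸ interior_mono hts))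

end AddCircle

section Fibre

variable {B Y : Type*} [TopologicalSpace B] [TopologicalSpace Y]

theorem isNowhereDense_setOf_forall_mem_prod {M : Set (B × Y)} (hM_closed : IsClosed M)
    (hM_int : interior M = ∅) {U : Set Y} (hU_open : IsOpen U) (hU : U.Nonempty) :
    IsNowhereDense {b | ∀ y ∈ U, (b, y) ∈ M} := by
  set S := {b | ∀ y ∈ U, (b, y) ∈ M}
  have hS_closed : IsClosed S := by
    simp_rw [S, ofPred_forall]
    exact isClosed_biInter fun y _ => hM_closed.preimage (.prodMk_left y)
  refine hS_closed.isNowhereDense_iff.mpr ?_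
  have hprod : interior S ×ˢ U ⊆ interior M :=
    interior_maximal (fun x hx => interior_subset (s := S) hx.1 _ hx.2)
      (isOpen_interior.prod hU_open)
  rw [hM_int, subset_empty_iff, prod_eq_empty_iff] at hprod
  exact hprod.resolve_right hU.ne_empty

theorem residual_interior_fibre_eq_empty [SecondCountableTopology Y] {M : Set (B × Y)}
    (hM : IsNowhereDense M) : {b | interior {y | (b, y) ∈ M} = ∅} ∈ residual B := by
  suffices IsMeagre {b | (interior {y | (b, y) ∈ closure M}).Nonempty} from
    Filter.mem_of_superset this fun b hb => subset_empty_iff.mp <|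
      (interior_mono (preimage_mono subset_closure)).trans (not_nonempty_iff_eq_empty.mp hb).subset
  have hbasis := isBasis_countableBasis Y
  refine (isMeagre_biUnion (countable_countableBasis Y) fun U hU =>
    (isNowhereDense_setOf_forall_mem_prod isClosed_closure hM (hbasis.isOpen hU)
      (nonempty_of_mem_countableBasis hU)).isMeagre).mono ?_
  rintro b ⟨y, hy⟩
  obtain ⟨U, hU, -, hU_sub⟩ := hbasis.exists_subset_of_mem_open hy isOpen_interior
  exact mem_biUnion hU fun _ hy' => interior_subset (s := {y | (b, y) ∈ closure M}) (hU_sub hy')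

end Fibre

theorem typical_fibre_of_nowhere_dense_closed_set_totallyDisconnected_general
    {B : Type*} [MetricSpace B]
    (M : Set (B × AddCircle (1 : ℝ))) (hND : IsNowhereDense M) :
    {b : B | IsTotallyDisconnected {y : AddCircle (1 : ℝ) | (b, y) ∈ M}} ∈ residual B :=
  Filter.mem_of_superset (residual_interior_fibre_eq_empty hND) fun _ =>
    AddCircle.isTotallyDisconnected_of_interior_eq_empty_s8

/-- For a closed nowhere dense subset `M` of `B × S¹`, the set of `b ∈ B` over
which the fibre of `M` is totally disconnected is residual in `B`. -/
theorem typical_fibre_of_nowhere_dense_closed_set_totallyDisconnected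
    {B : Type*} [MetricSpace B] [CompactSpace B]
    (M : Set (B × AddCircle (1 : ℝ))) (hMcl : IsClosed M) (hND : IsNowhereDense M) :
    {b : B | IsTotallyDisconnected {y : AddCircle (1 : ℝ) | (b, y) ∈ M}} ∈ residual B :=
  typical_fibre_of_nowhere_dense_closed_set_totallyDisconnected_general M hND
end

section
/- Let X be a compact metric space and f : X → X a continuous minimal map. Then the homeo-part H of (X, f) is a dense Gδ subset of X. -/
open Set Topology

/-- The homeo-part of a dynamical system `(X, f)`: the set of points `x₀` whose full orbit
`{y | ∃ i j ≥ 0, f^[i] y = f^[j] x₀}` has the form `{…, x₋₁, x₀, x₁, …}` for a two-sided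
sequence with `f(xₙ) = xₙ₊₁`. -/
def homeoPart {X : Type*} (f : X → X) : Set X :=
  {x₀ | ∃ u : ℤ → X, u 0 = x₀ ∧ (∀ n : ℤ, f (u n) = u (n + 1)) ∧
    {y | ∃ i j : ℕ, f^[i] y = f^[j] x₀} = Set.range u}

/-!
A minimal map `f` of a compact space is irreducible: if a closed set `A` satisfies `f(A) = X`,
backward chains inside `A` and compactness give a point whose whole forward orbit lies in `A`,
so `A = X` by minimality. Images and preimages of closed nowhere dense sets under irreducible
maps are nowhere dense, and so is the closed set of points whose fibre contains two points at
distance `≥ ε`. Hence, by Baire, the points whose full orbit contains no point with two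
preimages form a dense Gδ set. This set is the homeo-part: a right inverse of the surjection `f`
builds the two-sided orbit, and conversely a two-sided orbit that is not injective yields a
periodic point, which for a minimal map forces `X` to be finite and `f` bijective.
-/

open Function

structure IsIrreducibleMap {X Y : Type*} [TopologicalSpace X] (g : X → Y) : Prop where
  surjective : Surjective g
  eq_univ_of_image_eq_univ : ∀ A : Set X, IsClosed A → g '' A = univ → A = univ

namespace IsIrreducibleMap

variable {X Y Z : Type*} [TopologicalSpace X] [TopologicalSpace Y]

protected lemma id : IsIrreducibleMap (id : X → X) :=
  ⟨surjective_id, fun A _ hA => by rwa [image_id] at hA⟩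

lemma comp [CompactSpace X] [T2Space Y] {h : Y → Z} {g : X → Y} (hh : IsIrreducibleMap h)
    (hg : IsIrreducibleMap g) (hgc : Continuous g) : IsIrreducibleMap (h ∘ g) :=
  ⟨hh.surjective.comp hg.surjective, fun A hA hhgA =>
    hg.2 A hA <| hh.2 _ (hA.isCompact.image hgc).isClosed <| by rwa [← image_comp]⟩

lemma iterate [CompactSpace X] [T2Space X] {f : X → X} (hf : IsIrreducibleMap f)
    (hfc : Continuous f) (n : ℕ) : IsIrreducibleMap f^[n] := by
  induction n with
  | zero => exact IsIrreducibleMap.id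
  | succ n ih => rw [iterate_succ]; exact ih.comp hf hfc

lemma preimage_subset {g : X → Y} (hg : IsIrreducibleMap g) (hgc : Continuous g) {U : Set Y}
    (hU : IsOpen U) {A : Set X} (hA : IsClosed A) (hUA : U ⊆ g '' A) : g ⁻¹' U ⊆ A := by
  have hB : A ∪ (g ⁻¹' U)ᶜ = univ := by
    refine hg.2 _ (hA.union (hU.preimage hgc).isClosed_compl) (eq_univ_of_forall fun z => ?_)
    by_cases hz : z ∈ U
    · exact image_mono subset_union_left (hUA hz)
    · obtain ⟨w, rfl⟩ := hg.surjective z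
      exact ⟨w, Or.inr hz, rfl⟩
  intro x hx
  have hxB : x ∈ A ∪ (g ⁻¹' U)ᶜ := hB ▸ mem_univ x
  exact hxB.resolve_right (not_not_intro hx)

lemma interior_image_eq_empty {g : X → Y} (hg : IsIrreducibleMap g) (hgc : Continuous g)
    {N : Set X} (hN : IsClosed N) (hN' : interior N = ∅) : interior (g '' N) = ∅ := by
  have hsub : g ⁻¹' interior (g '' N) ⊆ interior N :=
    interior_maximal (hg.preimage_subset hgc isOpen_interior hN interior_subset)
      (isOpen_interior.preimage hgc)
  rw [hN', subset_empty_iff, preimage_eq_empty_iff] at hsub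
  simpa [hg.surjective.range_eq] using hsub

lemma interior_preimage_eq_empty [CompactSpace X] [T2Space Y] {g : X → Y}
    (hg : IsIrreducibleMap g) (hgc : Continuous g) {N : Set Y} (hN : interior N = ∅) :
    interior (g ⁻¹' N) = ∅ := by
  set A := (interior (g ⁻¹' N))ᶜ
  have hAc : IsClosed A := isOpen_interior.isClosed_compl
  have hNA : Nᶜ ⊆ g '' A := by
    intro z hz
    obtain ⟨w, rfl⟩ := hg.surjective z
    exact ⟨w, fun hw => hz (interior_subset (s := g ⁻¹' N) hw), rfl⟩
  have hgA : g '' A = univ := by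
    rw [← (hAc.isCompact.image hgc).isClosed.closure_eq]
    exact ((interior_eq_empty_iff_dense_compl.mp hN).mono hNA).closure_eq
  exact compl_univ_iff.mp (hg.2 A hAc hgA)

end IsIrreducibleMap

section WideFibers

variable {X Y : Type*} [MetricSpace X]

def wideFibers (g : X → Y) (ε : ℝ) : Set Y :=
  {y | ∃ z₁ ∈ g ⁻¹' {y}, ∃ z₂ ∈ g ⁻¹' {y}, ε ≤ dist z₁ z₂}

lemma isClosed_wideFibers [CompactSpace X] [TopologicalSpace Y] [T2Space Y] {g : X → Y}
    (hg : Continuous g) (ε : ℝ) : IsClosed (wideFibers g ε) := by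
  have : wideFibers g ε = (g ∘ Prod.fst) '' {p : X × X | g p.1 = g p.2 ∧ ε ≤ dist p.1 p.2} := by
    ext y
    constructor
    · rintro ⟨z₁, rfl, z₂, h₂, hd⟩
      exact ⟨(z₁, z₂), ⟨h₂.symm, hd⟩, rfl⟩
    · rintro ⟨⟨z₁, z₂⟩, ⟨h, hd⟩, rfl⟩
      exact ⟨z₁, rfl, z₂, h.symm, hd⟩
  rw [this]
  refine (IsClosed.isCompact ?_).image (hg.comp continuous_fst) |>.isClosed
  exact (isClosed_eq (hg.comp continuous_fst) (hg.comp continuous_snd)).inter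
    (isClosed_le continuous_const continuous_dist)

lemma IsIrreducibleMap.interior_wideFibers_eq_empty [TopologicalSpace Y] {g : X → Y}
    (hg : IsIrreducibleMap g) (hgc : Continuous g) {ε : ℝ} (hε : 0 < ε) :
    interior (wideFibers g ε) = ∅ := by
  by_contra hne
  obtain ⟨v, hv⟩ := (nonempty_iff_ne_empty.mpr hne).preimage hg.surjective
  -- two points at distance `≥ ε` cannot both lie in a ball of radius `ε / 2`
  have hU : interior (wideFibers g ε) ⊆ g '' (Metric.ball v (ε / 2))ᶜ := by
    intro z hz
    obtain ⟨z₁, h₁, z₂, h₂, hd⟩ := interior_subset hz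
    by_cases hz₁ : z₁ ∈ Metric.ball v (ε / 2)
    · refine ⟨z₂, fun hz₂ => ?_, h₂⟩
      have := dist_triangle_right z₁ z₂ v
      rw [Metric.mem_ball] at hz₁ hz₂
      linarith
    · exact ⟨z₁, hz₁, h₁⟩
  exact hg.preimage_subset hgc isOpen_interior Metric.isOpen_ball.isClosed_compl hU hv
    (Metric.mem_ball_self (half_pos hε))

lemma preimage_singleton_subsingleton_iff (g : X → Y) (y : Y) :
    (g ⁻¹' {y}).Subsingleton ↔ ∀ n : ℕ, y ∉ wideFibers g (1 / (n + 1)) := by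
  constructor
  · rintro hs n ⟨z₁, h₁, z₂, h₂, hd⟩
    rw [hs h₁ h₂, dist_self] at hd
    linarith [Nat.one_div_pos_of_nat (α := ℝ) (n := n)]
  · intro h z₁ h₁ z₂ h₂
    by_contra hne
    obtain ⟨n, hn⟩ := exists_nat_one_div_lt (dist_pos.mpr hne)
    exact h n ⟨z₁, h₁, z₂, h₂, hn.le⟩

end WideFibers

section Minimal

variable {X : Type*} [TopologicalSpace X] {f : X → X}

lemma exists_forall_iterate_mem [CompactSpace X] [Nonempty X] (hf : Continuous f) {A : Set X}
    (hA : IsClosed A) (hfA : f '' A = univ) : ∃ x, ∀ n, f^[n] x ∈ A := by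
  set C : ℕ → Set X := fun n => ⋂ k ∈ Iio n, f^[k] ⁻¹' A
  -- a backward chain `y ← a₁ ← a₂ ← ⋯` inside `A` shows that `f^[n]` maps `C n` onto `X`
  have hCsurj : ∀ n y, ∃ x ∈ C n, f^[n] x = y := by
    intro n
    induction n with
    | zero => exact fun y => ⟨y, by simp [C], rfl⟩
    | succ n ih =>
      intro y
      obtain ⟨x', hx'C, rfl⟩ := ih y
      obtain ⟨x, hxA, rfl⟩ := hfA.symm ▸ mem_univ x'
      refine ⟨x, ?_, rfl⟩
      simp only [C, mem_iInter₂, mem_Iio, mem_preimage] at hx'C ⊢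
      rintro (_ | k) hk
      · exact hxA
      · exact hx'C k (by omega)
  have hCanti : ∀ n, C (n + 1) ⊆ C n :=
    fun n => biInter_subset_biInter_left (Iio_subset_Iio n.le_succ)
  have hCclosed : ∀ n, IsClosed (C n) :=
    fun n => isClosed_biInter fun k _ => hA.preimage (hf.iterate k)
  obtain ⟨x, hx⟩ := IsCompact.nonempty_iInter_of_sequence_nonempty_isCompact_isClosed C hCanti
    (fun n => (hCsurj n (Classical.arbitrary X)).imp fun _ h => h.1)
    (hCclosed 0).isCompact hCclosed
  refine ⟨x, fun n => ?_⟩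
  have hxC : x ∈ C (n + 1) := mem_iInter.mp hx (n + 1)
  exact mem_iInter₂.mp hxC n n.lt_succ_self

lemma surjective_of_dense_orbits [CompactSpace X] [T2Space X] (hf : Continuous f)
    (hmin : ∀ x, Dense (range fun n => f^[n] x)) : Surjective f := by
  intro y
  have hrange : (range fun n => f^[n] (f y)) ⊆ range f :=
    range_subset_iff.mpr fun n => ⟨f^[n] y, (iterate_succ_apply' f n y).symm⟩
  have := closure_minimal hrange (isCompact_range hf).isClosed
  rw [(hmin (f y)).closure_eq] at this
  exact this (mem_univ y)

lemma isIrreducibleMap_of_dense_orbits [CompactSpace X] [T2Space X] (hf : Continuous f)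
    (hmin : ∀ x, Dense (range fun n => f^[n] x)) : IsIrreducibleMap f := by
  refine ⟨surjective_of_dense_orbits hf hmin, fun A hA hfA => ?_⟩
  cases isEmpty_or_nonempty X
  · exact Subsingleton.elim _ _
  obtain ⟨x, hx⟩ := exists_forall_iterate_mem hf hA hfA
  rw [← univ_subset_iff, ← (hmin x).closure_eq]
  exact closure_minimal (range_subset_iff.mpr hx) hA

lemma finite_of_isPeriodicPt [T1Space X] (hmin : ∀ x, Dense (range fun n => f^[n] x))
    {n : ℕ} {x : X} (hx : IsPeriodicPt f n x) (hn : 0 < n) : Finite X := by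
  have hfin : (range fun k => f^[k] x).Finite :=
    ((finite_Iio n).image fun k => f^[k] x).subset <| range_subset_iff.mpr fun k =>
      ⟨k % n, Nat.mod_lt k hn, hx.iterate_mod_apply k⟩
  rw [← finite_univ_iff, ← (hmin x).closure_eq, hfin.isClosed.closure_eq]
  exact hfin

end Minimal

section Orbits

variable {X : Type*} {f : X → X}

def fullOrbit (f : X → X) (x₀ : X) : Set X := {y | ∃ i j : ℕ, f^[i] y = f^[j] x₀}

def injPart (f : X → X) : Set X := {x₀ | ∀ y ∈ fullOrbit f x₀, (f ⁻¹' {y}).Subsingleton}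

lemma mem_fullOrbit_of_apply_mem {x₀ y : X} (hy : f y ∈ fullOrbit f x₀) : y ∈ fullOrbit f x₀ :=
  let ⟨i, j, h⟩ := hy; ⟨i + 1, j, h⟩

lemma iterate_apply_eq_add {u : ℤ → X} (hu : ∀ n, f (u n) = u (n + 1)) (k : ℕ) (m : ℤ) :
    f^[k] (u m) = u (m + k) := by
  induction k generalizing m with
  | zero => simp
  | succ k ih => rw [iterate_succ_apply, hu, ih]; push_cast; ring_nf

lemma range_subset_fullOrbit {u : ℤ → X} (hu : ∀ n, f (u n) = u (n + 1)) :
    range u ⊆ fullOrbit f (u 0) := by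
  rintro _ ⟨n, rfl⟩
  refine ⟨(-n).toNat, n.toNat, ?_⟩
  rw [iterate_apply_eq_add hu, iterate_apply_eq_add hu]
  congr 1
  omega

lemma finite_of_not_injective [TopologicalSpace X] [T1Space X]
    (hmin : ∀ x, Dense (range fun n => f^[n] x)) {u : ℤ → X} (hu : ∀ n, f (u n) = u (n + 1))
    (hinj : ¬ Injective u) : Finite X := by
  obtain ⟨a, b, hab, hne⟩ : ∃ a b, u a = u b ∧ a < b := by
    simp only [Injective, not_forall] at hinj
    obtain ⟨a, b, hab, hne⟩ := hinj
    rcases lt_or_gt_of_ne hne with h | h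
    exacts [⟨a, b, hab, h⟩, ⟨b, a, hab.symm, h⟩]
  refine finite_of_isPeriodicPt hmin (n := (b - a).toNat) (x := u a) ?_ (by omega)
  rw [IsPeriodicPt, IsFixedPt, iterate_apply_eq_add hu, hab]
  congr 1
  omega

lemma homeoPart_subset_injPart [TopologicalSpace X] [CompactSpace X] [T2Space X]
    (hf : Continuous f) (hmin : ∀ x, Dense (range fun n => f^[n] x)) :
    homeoPart f ⊆ injPart f := by
  rintro _ ⟨u, rfl, hu, hrange⟩ y hy z₁ (hz₁ : f z₁ = y) z₂ (hz₂ : f z₂ = y)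
  change fullOrbit f (u 0) = range u at hrange
  by_cases hinj : Injective u
  · obtain ⟨a, rfl⟩ : z₁ ∈ range u := hrange ▸ mem_fullOrbit_of_apply_mem (hz₁ ▸ hy)
    obtain ⟨b, rfl⟩ : z₂ ∈ range u := hrange ▸ mem_fullOrbit_of_apply_mem (hz₂ ▸ hy)
    have hab : u (a + 1) = u (b + 1) := by rw [← hu, ← hu, hz₁, hz₂]
    rw [add_left_injective 1 (hinj hab)]
  · have := finite_of_not_injective hmin hu hinj
    exact Finite.injective_iff_surjective.mpr (surjective_of_dense_orbits hf hmin)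
      (hz₁.trans hz₂.symm)

def twoSidedOrbit (f g : X → X) (x : X) : ℤ → X
  | Int.ofNat n => f^[n] x
  | Int.negSucc n => g^[n + 1] x

lemma twoSidedOrbit_succ {g : X → X} (hfg : RightInverse g f) (x : X) (n : ℤ) :
    f (twoSidedOrbit f g x n) = twoSidedOrbit f g x (n + 1) := by
  rcases n with n | _ | n
  · exact (iterate_succ_apply' f n x).symm
  · exact hfg x
  · show f (g^[n + 2] x) = g^[n + 1] x
    rw [iterate_succ_apply', hfg]

lemma injPart_subset_homeoPart (hs : Surjective f) : injPart f ⊆ homeoPart f := by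
  intro x₀ hx₀
  set u := twoSidedOrbit f (surjInv hs) x₀
  have hu : ∀ n, f (u n) = u (n + 1) := twoSidedOrbit_succ (rightInverse_surjInv hs) x₀
  refine ⟨u, rfl, hu, (range_subset_fullOrbit hu).antisymm' ?_⟩
  rintro y ⟨i, j, hij⟩
  induction i generalizing y with
  | zero => exact ⟨j, hij.symm⟩
  | succ i ih =>
    obtain ⟨m, hm⟩ := ih (y := f y) hij
    -- `y` and `u (m - 1)` are both preimages of the orbit point `u m`
    refine ⟨m - 1, hx₀ (u m) (range_subset_fullOrbit hu ⟨m, rfl⟩) ?_ hm.symm⟩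
    simp [mem_preimage, hu]

end Orbits

lemma dense_and_isGδ_iInter_compl {X ι : Type*} [TopologicalSpace X] [BaireSpace X]
    [Countable ι] {s : ι → Set X} (hs : ∀ i, IsClosed (s i)) (hs' : ∀ i, interior (s i) = ∅) :
    Dense (⋂ i, (s i)ᶜ) ∧ IsGδ (⋂ i, (s i)ᶜ) :=
  ⟨dense_iInter_of_isOpen (fun i => (hs i).isOpen_compl)
    (fun i => interior_eq_empty_iff_dense_compl.mp (hs' i)),
    IsGδ.iInter_of_isOpen fun i => (hs i).isOpen_compl⟩

section InjPart

variable {X : Type*} [MetricSpace X]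

lemma injPart_eq_iInter (f : X → X) :
    injPart f =
      ⋂ p : ℕ × ℕ × ℕ, (f^[p.2.1] ⁻¹' (f^[p.1] '' wideFibers f (1 / (p.2.2 + 1))))ᶜ := by
  ext x₀
  simp only [injPart, fullOrbit, preimage_singleton_subsingleton_iff, mem_iInter,
    mem_compl_iff, mem_preimage, mem_image, Prod.forall, not_exists, not_and]
  exact ⟨fun h i j n y hy hij => h y ⟨i, j, hij⟩ n hy,
    fun h y ⟨i, j, hij⟩ n hy => h i j n y hy hij⟩

lemma IsIrreducibleMap.dense_and_isGδ_injPart [CompactSpace X] {f : X → X} (hf : IsIrreducibleMap f)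
    (hfc : Continuous f) : Dense (injPart f) ∧ IsGδ (injPart f) := by
  rw [injPart_eq_iInter]
  refine dense_and_isGδ_iInter_compl (fun ⟨i, j, n⟩ => ?_) (fun ⟨i, j, n⟩ => ?_)
  · exact ((isClosed_wideFibers hfc _).isCompact.image (hfc.iterate i)).isClosed.preimage
      (hfc.iterate j)
  · refine (hf.iterate hfc j).interior_preimage_eq_empty (hfc.iterate j) ?_
    exact (hf.iterate hfc i).interior_image_eq_empty (hfc.iterate i) (isClosed_wideFibers hfc _)
      (hf.interior_wideFibers_eq_empty hfc Nat.one_div_pos_of_nat)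

end InjPart

/-- The homeo-part of a continuous minimal map of a compact metric space is a
dense Gδ subset. -/
theorem homeoPart_dense_Gdelta
    {X : Type*} [MetricSpace X] [CompactSpace X]
    (f : X → X) (hf : Continuous f)
    (hmin : ∀ x : X, Dense (Set.range fun n => f^[n] x)) :
    Dense (homeoPart f) ∧ IsGδ (homeoPart f) := by
  have hhomeo : homeoPart f = injPart f := (homeoPart_subset_injPart hf hmin).antisymm
    (injPart_subset_homeoPart (surjective_of_dense_orbits hf hmin))
  rw [hhomeo]
  exact (isIrreducibleMap_of_dense_orbits hf hmin).dense_and_isGδ_injPart hf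
end

section
/- Let X be a compact metric space and f : X → X a continuous minimal map. Let (x_n)_{n∈ℤ} be a two-sided sequence in X with f(x_n) = x_{n+1} for every integer n, and set D = {x_n : n ∈ ℤ}. Suppose that some point of D has more than one f-preimage in X (equivalently, some point of D has an f-preimage in X \ D). Then every map g : D → D satisfying g(x_{n+1}) = x_n for all n ∈ ℤ fails to be continuous on D (with the subspace topology); in particular, if f restricted to D is a bijection onto D, its inverse map is not continuous. -/
/-!
By minimality the full orbit `D` is dense, and `g` is a left inverse of `f` on `D`. Any `c` with
`f c ∈ D` is a limit of orbit points `d`, and `g (f d) = d`; continuity of `f` and `g` then forces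
`c = g (f c)`. So `f` is injective over `D`, contradicting the two distinct preimages.
-/

open Set Topology Filter Function

theorem Dense.eq_of_continuous_leftInverse_restrict {X Y : Type*} [TopologicalSpace X]
    [T2Space X] [TopologicalSpace Y] {f : X → Y} (hf : Continuous f) {D : Set X} (hD : Dense D)
    {E : Set Y} (hfD : MapsTo f D E) {g : E → D} (hg : Continuous g)
    (hgf : LeftInverse g (hfD.restrict f D E)) {c : X} (hc : f c ∈ E) :
    c = g ⟨f c, hc⟩ := by
  let l : Filter D := comap Subtype.val (𝓝 c)
  have : l.NeBot := mem_closure_iff_comap_neBot.mp (hD.closure_eq ▸ mem_univ c)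
  have hval : Tendsto Subtype.val l (𝓝 c) := tendsto_comap
  have hfl : Tendsto (hfD.restrict f D E) l (𝓝 ⟨f c, hc⟩) :=
    tendsto_subtype_rng.mpr ((hf.tendsto c).comp hval)
  have hid : Tendsto id l (𝓝 (g ⟨f c, hc⟩)) := by
    simpa only [hgf.comp_eq_id] using (hg.tendsto _).comp hfl
  exact tendsto_nhds_unique hval ((continuous_subtype_val.tendsto _).comp hid)

theorem Dense.injOn_preimage_of_continuous_leftInverse_restrict {X Y : Type*}
    [TopologicalSpace X] [T2Space X] [TopologicalSpace Y] {f : X → Y} (hf : Continuous f)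
    {D : Set X} (hD : Dense D) {E : Set Y} (hfD : MapsTo f D E) {g : E → D} (hg : Continuous g)
    (hgf : LeftInverse g (hfD.restrict f D E)) :
    InjOn f (f ⁻¹' E) := by
  intro a ha b hb hab
  rw [hD.eq_of_continuous_leftInverse_restrict hf hfD hg hgf ha,
    hD.eq_of_continuous_leftInverse_restrict hf hfD hg hgf hb]
  simp only [hab]

section FullOrbit

variable {X : Type*} {f : X → X} {x : ℤ → X}

theorem iterate_apply_eq_of_forall_map_eq_succ (hx : ∀ n, f (x n) = x (n + 1)) (m : ℤ) :
    ∀ k : ℕ, f^[k] (x m) = x (m + k)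
  | 0 => by simp
  | k + 1 => by
    rw [iterate_succ_apply', iterate_apply_eq_of_forall_map_eq_succ hx m k, hx]
    push_cast
    ring_nf

theorem mapsTo_range_of_forall_map_eq_succ (hx : ∀ n, f (x n) = x (n + 1)) :
    MapsTo f (range x) (range x) := by
  rintro _ ⟨m, rfl⟩
  exact ⟨m + 1, (hx m).symm⟩

theorem dense_range_of_forall_map_eq_succ [TopologicalSpace X]
    (hmin : ∀ y : X, Dense (range fun n => f^[n] y)) (hx : ∀ n, f (x n) = x (n + 1)) :
    Dense (range x) := by
  refine (hmin (x 0)).mono ?_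
  rintro _ ⟨k, rfl⟩
  exact ⟨k, by simp [iterate_apply_eq_of_forall_map_eq_succ hx 0 k]⟩

end FullOrbit

theorem inverse_on_full_orbit_not_continuous_general
    {X : Type*} [MetricSpace X]
    (f : X → X) (hf : Continuous f)
    (hmin : ∀ x : X, Dense (Set.range fun n => f^[n] x))
    (x : ℤ → X) (hx : ∀ n : ℤ, f (x n) = x (n + 1))
    (hpre : ∃ n : ℤ, ∃ a b : X, a ≠ b ∧ f a = x n ∧ f b = x n)
    (g : ↥(Set.range x) → ↥(Set.range x))
    (hg : ∀ n : ℤ, (g ⟨x (n + 1), ⟨n + 1, rfl⟩⟩ : X) = x n) :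
    ¬ Continuous g := by
  intro hcont
  obtain ⟨n, a, b, hab, ha, hb⟩ := hpre
  have hfD := mapsTo_range_of_forall_map_eq_succ hx
  have hgf : LeftInverse g (hfD.restrict f _ _) := by
    rintro ⟨_, m, rfl⟩
    have hstep : hfD.restrict f _ _ ⟨x m, m, rfl⟩ = ⟨x (m + 1), m + 1, rfl⟩ := Subtype.ext (hx m)
    exact Subtype.ext (hstep ▸ hg m)
  have hinj := (dense_range_of_forall_map_eq_succ hmin hx)
    |>.injOn_preimage_of_continuous_leftInverse_restrict hf hfD hcont hgf
  exact hab (hinj ⟨n, ha.symm⟩ ⟨n, hb.symm⟩ (ha.trans hb.symm))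

/-- Let `f` be a continuous minimal map of a compact metric space, and let
`D = {xₙ : n ∈ ℤ}` be a full orbit (forward orbit plus one backward orbit). If some point of
`D` has more than one `f`-preimage in `X`, then no map `g : D → D` with `g(xₙ₊₁) = xₙ` for
all `n ∈ ℤ` is continuous. -/
theorem inverse_on_full_orbit_not_continuous
    {X : Type*} [MetricSpace X] [CompactSpace X]
    (f : X → X) (hf : Continuous f)
    (hmin : ∀ x : X, Dense (Set.range fun n => f^[n] x))
    (x : ℤ → X) (hx : ∀ n : ℤ, f (x n) = x (n + 1))
    (hpre : ∃ n : ℤ, ∃ a b : X, a ≠ b ∧ f a = x n ∧ f b = x n)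
    (g : ↥(Set.range x) → ↥(Set.range x))
    (hg : ∀ n : ℤ, (g ⟨x (n + 1), ⟨n + 1, rfl⟩⟩ : X) = x n) :
    ¬ Continuous g :=
  inverse_on_full_orbit_not_continuous_general f hf hmin x hx hpre g hg
end

section
/- Let X be a compact metric space, f : X → X a continuous minimal map, and H the homeo-part of (X, f). Then: (1) f(H) = H = f⁻¹(H); (2) every point of H has exactly one f-preimage in X, and this preimage lies in H; (3) f restricted to H is a homeomorphism of H onto itself (with the subspace topology), and for every x ∈ H both the forward orbit {f^n(x) : n ≥ 0} and the backward orbit {y ∈ H : f^n(y) = x for some n ≥ 0} are dense in X. -/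
/-! A point of `H` is `u 0` for a two-sided orbit `u` exhausting its grand orbit, and then every
`u n` lies in `H` as well; this gives `f(H) = H = f⁻¹(H)`. The preimage `u (-1)` is the only one:
any other preimage is some `u n` and forces `u` to repeat a value, so `f` has a periodic point,
whose finite orbit is dense, hence all of `X`, and `f` is a permutation of a finite set.
The map `H → H` is the restriction of the closed map `f` to the full preimage `f⁻¹(H) = H`, so it
is closed, hence a homeomorphism. Finally a backward orbit `u 0, u (-1), …` is dense because its
α-limit set `⋂ₙ closure {u (-k) | k ≥ n}` is nonempty, closed and forward invariant, so it
contains a whole forward orbit, which is dense. -/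

open Set Topology

open Function

lemma exists_homeomorph_of_bijOn_of_preimage_eq {X Y : Type*} [TopologicalSpace X]
    [CompactSpace X] [TopologicalSpace Y] [T2Space Y] {f : X → Y} (hf : Continuous f)
    {s : Set X} {t : Set Y} (hpre : f ⁻¹' t = s) (hbij : BijOn f s t) :
    ∃ h : s ≃ₜ t, ∀ a : s, (h a : Y) = f a := by
  subst hpre
  exact ⟨(hbij.equiv f).toHomeomorphOfContinuousClosed hf.restrictPreimage
    (hf.isClosedMap.restrictPreimage t), fun _ => rfl⟩

section GrandOrbit

variable {X : Type*} {f : X → X}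

def grandOrbit (f : X → X) (x : X) : Set X := {y | ∃ i j : ℕ, f^[i] y = f^[j] x}

lemma mem_grandOrbit_comm {x y : X} : y ∈ grandOrbit f x ↔ x ∈ grandOrbit f y :=
  ⟨fun ⟨i, j, h⟩ => ⟨j, i, h.symm⟩, fun ⟨i, j, h⟩ => ⟨j, i, h.symm⟩⟩

lemma mem_grandOrbit_trans {x y z : X} (hxy : y ∈ grandOrbit f x) (hyz : z ∈ grandOrbit f y) :
    z ∈ grandOrbit f x := by
  obtain ⟨i, j, hij⟩ := hxy
  obtain ⟨a, b, hab⟩ := hyz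
  refine ⟨i + a, b + j, ?_⟩
  rw [iterate_add_apply, hab, iterate_add_apply, ← hij, ← iterate_add_apply,
    ← iterate_add_apply, add_comm]

lemma grandOrbit_eq_of_mem {x y : X} (hy : y ∈ grandOrbit f x) : grandOrbit f y = grandOrbit f x :=
  Subset.antisymm (fun _ hz => mem_grandOrbit_trans hy hz)
    (fun _ hz => mem_grandOrbit_trans (mem_grandOrbit_comm.1 hy) hz)

end GrandOrbit

section TwoSidedOrbit

variable {X : Type*} {f : X → X} {u : ℤ → X}

lemma iterate_apply_of_forall_apply_eq (hu : ∀ n : ℤ, f (u n) = u (n + 1)) (k : ℕ) (m : ℤ) :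
    f^[k] (u m) = u (m + k) := by
  induction k with
  | zero => simp
  | succ k ih => rw [iterate_succ_apply', ih, hu]; congr 1; push_cast; ring

lemma mem_grandOrbit_of_forall_apply_eq (hu : ∀ n : ℤ, f (u n) = u (n + 1)) (m n : ℤ) :
    u m ∈ grandOrbit f (u n) := by
  refine ⟨(n - m).toNat, (m - n).toNat, ?_⟩
  rw [iterate_apply_of_forall_apply_eq hu, iterate_apply_of_forall_apply_eq hu]
  congr 1
  omega

lemma isPeriodicPt_of_forall_apply_eq (hu : ∀ n : ℤ, f (u n) = u (n + 1)) {a b : ℤ}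
    (hab : a < b) (h : u a = u b) : IsPeriodicPt f (b - a).toNat (u a) := by
  change f^[(b - a).toNat] (u a) = u a
  rw [iterate_apply_of_forall_apply_eq hu, h]
  congr 1
  omega

end TwoSidedOrbit

section HomeoPart

variable {X : Type*} {f : X → X}

lemma mem_homeoPart_of_forall_apply_eq {u : ℤ → X} (hu : ∀ n : ℤ, f (u n) = u (n + 1))
    (hrange : grandOrbit f (u 0) = range u) (n : ℤ) : u n ∈ homeoPart f := by
  refine ⟨fun m => u (m + n), by simp, fun m => by rw [hu, add_right_comm], ?_⟩
  change grandOrbit f (u n) = _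
  rw [grandOrbit_eq_of_mem (mem_grandOrbit_of_forall_apply_eq hu n 0), hrange]
  exact ((Equiv.addRight n).surjective.range_comp u).symm

lemma mapsTo_homeoPart : MapsTo f (homeoPart f) (homeoPart f) := by
  rintro _ ⟨u, rfl, hu, hrange⟩
  rw [hu, zero_add]
  exact mem_homeoPart_of_forall_apply_eq hu hrange 1

lemma surjOn_homeoPart : SurjOn f (homeoPart f) (homeoPart f) := by
  rintro _ ⟨u, rfl, hu, hrange⟩
  exact ⟨u (-1), mem_homeoPart_of_forall_apply_eq hu hrange (-1), hu (-1)⟩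

lemma image_homeoPart : f '' homeoPart f = homeoPart f :=
  mapsTo_homeoPart.image_subset.antisymm surjOn_homeoPart

lemma mem_homeoPart_of_apply_mem {y : X} (hy : f y ∈ homeoPart f) : y ∈ homeoPart f := by
  obtain ⟨u, hu0, hu, hrange⟩ := hy
  obtain ⟨n, rfl⟩ : y ∈ range u := hrange ▸ ⟨1, 0, rfl⟩
  exact mem_homeoPart_of_forall_apply_eq hu (hu0 ▸ hrange) n

lemma preimage_homeoPart : f ⁻¹' homeoPart f = homeoPart f :=
  Subset.antisymm (fun _ => mem_homeoPart_of_apply_mem) mapsTo_homeoPart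

end HomeoPart

section Minimal

variable {X : Type*} [TopologicalSpace X] {f : X → X}

lemma injective_of_dense_orbit_of_isPeriodicPt [T1Space X] {z : X} {p : ℕ} (hp : 0 < p)
    (hz : IsPeriodicPt f p z) (hdense : Dense (range fun n => f^[n] z)) : Injective f := by
  have horbit : range (fun n => f^[n] z) = range (fun k : Fin p => f^[k] z) :=
    Subset.antisymm (fun _ ⟨n, hn⟩ => ⟨⟨n % p, Nat.mod_lt n hp⟩, hn ▸ hz.iterate_mod_apply n⟩)
      (fun _ ⟨k, hk⟩ => ⟨k, hk⟩)
  have hfin : (range fun n => f^[n] z).Finite := horbit ▸ finite_range _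
  have huniv : range (fun n => f^[n] z) = univ := by
    rw [← hdense.closure_eq, hfin.isClosed.closure_eq]
  have : Finite X := finite_univ_iff.1 (huniv ▸ hfin)
  refine Finite.injective_iff_surjective.2 fun y => ?_
  obtain ⟨n, rfl⟩ := huniv.symm ▸ mem_univ y
  refine ⟨f^[n + p - 1] z, ?_⟩
  rw [← iterate_succ_apply' f, Nat.succ_eq_add_one, Nat.sub_add_cancel (by omega),
    iterate_add_apply, hz.eq]

lemma existsUnique_apply_eq_of_mem_homeoPart [T1Space X]
    (hmin : ∀ x : X, Dense (range fun n => f^[n] x)) {x : X} (hx : x ∈ homeoPart f) :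
    ∃! y, f y = x := by
  obtain ⟨u, rfl, hu, hrange⟩ := hx
  have hprev : f (u (-1)) = u 0 := hu (-1)
  refine ⟨u (-1), hprev, fun y hy => ?_⟩
  obtain ⟨n, rfl⟩ : y ∈ range u := hrange ▸ ⟨1, 0, hy⟩
  by_cases hn : n = -1
  · rw [hn]
  have hrep : u (n + 1) = u 0 := by rw [← hu, hy]
  have hinj : Injective f := by
    rcases Ne.lt_or_gt (show n + 1 ≠ 0 by omega) with hlt | hgt
    · exact injective_of_dense_orbit_of_isPeriodicPt (by omega)
        (isPeriodicPt_of_forall_apply_eq hu hlt hrep) (hmin _)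
    · exact injective_of_dense_orbit_of_isPeriodicPt (by omega)
        (isPeriodicPt_of_forall_apply_eq hu hgt hrep.symm) (hmin _)
  exact hinj (hy.trans hprev.symm)

lemma dense_range_of_forall_apply_succ_eq [CompactSpace X] (hf : Continuous f)
    (hmin : ∀ x : X, Dense (range fun n => f^[n] x)) {v : ℕ → X}
    (hv : ∀ k, f (v (k + 1)) = v k) : Dense (range v) := by
  set S : ℕ → Set X := fun N => closure (range fun k => v (k + N))
  have hanti : ∀ N, S (N + 1) ⊆ S N := fun N =>
    closure_mono fun _ ⟨k, hk⟩ => ⟨k + 1, hk ▸ congrArg v (by omega)⟩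
  have hmaps : ∀ N, MapsTo f (S (N + 1)) (S N) := fun N => by
    refine fun y hy => closure_mono ?_ (image_closure_subset_closure_image hf ⟨y, hy, rfl⟩)
    rintro _ ⟨_, ⟨k, rfl⟩, rfl⟩
    exact ⟨k, (hv (k + N)).symm⟩
  obtain ⟨c, hc⟩ := IsCompact.nonempty_iInter_of_sequence_nonempty_isCompact_isClosed S hanti
    (fun N => ⟨v (0 + N), subset_closure (mem_range_self 0)⟩) isClosed_closure.isCompact
    (fun _ => isClosed_closure)
  have hinv : MapsTo f (⋂ N, S N) (⋂ N, S N) := fun y hy =>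
    mem_iInter.2 fun N => hmaps N (mem_iInter.1 hy (N + 1))
  have horbit : range (fun n => f^[n] c) ⊆ S 0 := by
    rintro _ ⟨n, rfl⟩
    exact mem_iInter.1 (hinv.iterate n hc) 0
  exact dense_closure.1 ((hmin c).mono horbit)

lemma dense_backwardOrbit_of_mem_homeoPart [CompactSpace X] (hf : Continuous f)
    (hmin : ∀ x : X, Dense (range fun n => f^[n] x)) {x : X} (hx : x ∈ homeoPart f) :
    Dense {y | y ∈ homeoPart f ∧ ∃ n : ℕ, f^[n] y = x} := by
  obtain ⟨u, rfl, hu, hrange⟩ := hx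
  refine (dense_range_of_forall_apply_succ_eq hf hmin (v := fun k : ℕ => u (-k))
    fun k => by rw [hu]; congr 1; push_cast; ring).mono ?_
  rintro _ ⟨k, rfl⟩
  exact ⟨mem_homeoPart_of_forall_apply_eq hu hrange _, k,
    by rw [iterate_apply_of_forall_apply_eq hu, neg_add_cancel]⟩

end Minimal

/-- Properties of the homeo-part `H` of a continuous minimal map `f` of a
compact metric space: (1) `f(H) = H = f⁻¹(H)`; (2) every point of `H` has exactly one
`f`-preimage in `X`, and it lies in `H`; (3) `f` restricted to `H` is a homeomorphism of `H`
onto itself, and the forward and backward orbits of every point of `H` are dense in `X`. -/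
theorem homeoPart_properties
    {X : Type*} [MetricSpace X] [CompactSpace X]
    (f : X → X) (hf : Continuous f)
    (hmin : ∀ x : X, Dense (Set.range fun n => f^[n] x)) :
    f '' homeoPart f = homeoPart f ∧
    f ⁻¹' homeoPart f = homeoPart f ∧
    (∀ x ∈ homeoPart f, ∃! y : X, f y = x) ∧
    (∀ x ∈ homeoPart f, ∀ y : X, f y = x → y ∈ homeoPart f) ∧
    (∃ h : ↥(homeoPart f) ≃ₜ ↥(homeoPart f), ∀ a : ↥(homeoPart f), (h a : X) = f a) ∧
    (∀ x ∈ homeoPart f, Dense (Set.range fun n => f^[n] x)) ∧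
    (∀ x ∈ homeoPart f, Dense {y | y ∈ homeoPart f ∧ ∃ n : ℕ, f^[n] y = x}) := by
  have huniq : ∀ x ∈ homeoPart f, ∃! y : X, f y = x := fun _ =>
    existsUnique_apply_eq_of_mem_homeoPart hmin
  have hinj : InjOn f (homeoPart f) := fun a ha _ _ hab =>
    (huniq _ (mapsTo_homeoPart ha)).unique rfl hab.symm
  exact ⟨image_homeoPart, preimage_homeoPart, huniq,
    fun x hx y hy => mem_homeoPart_of_apply_mem (hy ▸ hx),
    exists_homeomorph_of_bijOn_of_preimage_eq hf preimage_homeoPart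
      ⟨mapsTo_homeoPart, hinj, surjOn_homeoPart⟩,
    fun x _ => hmin x, fun _ => dense_backwardOrbit_of_mem_homeoPart hf hmin⟩
end

section
/- Let X be a compact metric space, f : X → X a continuous minimal map, and H the homeo-part of (X, f). If a subset H' ⊆ X satisfies f(H') = H' = f⁻¹(H') and every point of H' has exactly one f-preimage in X, then H' ⊆ H; that is, H is the maximal subset of X which is fully invariant and on which all f-preimages are unique. -/
open Set Topology

/-!
Since `f ⁻¹' H' = H'`, the set `H'` is mapped into itself and every preimage of a point of `H'`
lies in `H'`; with uniqueness of preimages, `f` restricts to a permutation `e` of `H'`. For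
`x₀ ∈ H'` the two-sided sequence `n ↦ eⁿ x₀` is then the whole full orbit of `x₀`: a point `y`
with `fⁱ y = fʲ x₀` lies in `H'`, so injectivity of `e` forces `y = e^(j - i) x₀`.
-/

open Function

namespace Set

variable {X : Type*} {f : X → X} {s : Set X}

theorem bijOn_of_preimage_eq_of_existsUnique (hs : f ⁻¹' s = s)
    (huniq : ∀ x ∈ s, ∃! y, f y = x) : BijOn f s s := by
  have hmaps : MapsTo f s s := fun x hx => by rwa [← hs] at hx
  refine ⟨hmaps, fun x hx y hy hxy => (huniq (f y) (hmaps hy)).unique hxy rfl, fun x hx => ?_⟩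
  obtain ⟨y, rfl, -⟩ := huniq x hx
  exact ⟨y, by rwa [← hs], rfl⟩

theorem preimage_iterate_eq_self (hs : f ⁻¹' s = s) (n : ℕ) : f^[n] ⁻¹' s = s := by
  rw [preimage_iterate_eq]
  exact IsFixedPt.iterate hs n

end Set

theorem mem_homeoPart_of_bijOn {X : Type*} {f : X → X} {s : Set X} (hs : f ⁻¹' s = s)
    (hbij : BijOn f s s) {x₀ : X} (hx₀ : x₀ ∈ s) : x₀ ∈ homeoPart f := by
  set e : Equiv.Perm s := hbij.equiv f
  have iterate_val (k : ℕ) (z : s) : f^[k] z = ((e ^ k) z : X) :=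
    ((Semiconj.iterate_right (f := Subtype.val) (fun _ => rfl) k) z).symm
  set x : s := ⟨x₀, hx₀⟩
  refine ⟨fun n => ((e ^ n) x : X), rfl, fun n => ?_, ?_⟩
  · show f ((e ^ n) x : X) = ((e ^ (n + 1)) x : X)
    rw [add_comm, zpow_one_add, Equiv.Perm.mul_apply]
    rfl
  ext y
  constructor
  · rintro ⟨i, j, hij⟩
    have hy : y ∈ s := by
      rw [← preimage_iterate_eq_self hs i, mem_preimage, hij, ← mem_preimage,
        preimage_iterate_eq_self hs j]
      exact hx₀
    have hij' : (e ^ i) ⟨y, hy⟩ = (e ^ j) x :=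
      Subtype.val_injective <| by rw [← iterate_val, ← iterate_val]; exact hij
    refine ⟨j - i, congrArg Subtype.val (?_ : (e ^ ((j : ℤ) - i)) x = ⟨y, hy⟩)⟩
    apply (e ^ i).injective
    rw [hij', ← Equiv.Perm.mul_apply, ← zpow_natCast, ← zpow_add, add_sub_cancel, zpow_natCast]
  · rintro ⟨n, rfl⟩
    obtain ⟨k, rfl | rfl⟩ := Int.eq_nat_or_neg n
    · refine ⟨0, k, ?_⟩
      dsimp only
      rw [iterate_zero_apply, zpow_natCast]
      exact (iterate_val k x).symm
    · refine ⟨k, 0, ?_⟩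
      rw [iterate_val, iterate_zero_apply, ← Equiv.Perm.mul_apply, ← zpow_natCast, ← zpow_add,
        add_neg_cancel, zpow_zero]
      rfl

theorem homeoPart_maximal_general
    {X : Type*}
    (f : X → X)
    (H' : Set X) (hpreim : f ⁻¹' H' = H')
    (huniq : ∀ x ∈ H', ∃! y : X, f y = x) :
    H' ⊆ homeoPart f := fun _ hx₀ =>
  mem_homeoPart_of_bijOn hpreim (bijOn_of_preimage_eq_of_existsUnique hpreim huniq) hx₀

/-- The homeo-part of a continuous minimal map `f` of a compact metric space
is the maximal fully invariant subset on which all `f`-preimages are unique: any `H'` with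
`f(H') = H' = f⁻¹(H')` all of whose points have exactly one `f`-preimage in `X` is contained
in the homeo-part. -/
theorem homeoPart_maximal
    {X : Type*} [MetricSpace X] [CompactSpace X]
    (f : X → X) (hf : Continuous f)
    (hmin : ∀ x : X, Dense (Set.range fun n => f^[n] x))
    (H' : Set X) (himg : f '' H' = H') (hpreim : f ⁻¹' H' = H')
    (huniq : ∀ x ∈ H', ∃! y : X, f y = x) :
    H' ⊆ homeoPart f :=
  homeoPart_maximal_general f H' hpreim huniq
end

section
/- Let X be a compact metric space and f : X → X a continuous map. Then f is minimal if and only if f is surjective and every backward orbit of every point of X is dense in X; that is, if and only if f(X) = X and for every sequence (x_n)_{n≥0} in X with f(x_{n+1}) = x_n for all n ≥ 0, the set {x_n : n ≥ 0} is dense in X. -/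
/-!
A minimal map has no proper nonempty closed invariant subset. The range of `f` is such a set,
and so is the set of cluster points of a backward orbit, which lies in the closure of that orbit;
hence minimality gives surjectivity and dense backward orbits. Conversely, the closure `A` of a
forward orbit is compact and invariant, and on the eventual image `⋂ n, fⁿ(A)` the map is onto by
compactness, so a backward orbit can be built inside `A`; being dense, it forces `A = X`.
-/

open Set Filter Topology Function

section Orbits

variable {α : Type*} {f : α → α}

theorem mapsTo_range_iterate (f : α → α) (x : α) :
    MapsTo f (range fun n => f^[n] x) (range fun n => f^[n] x) := by
  rintro _ ⟨n, rfl⟩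
  exact ⟨n + 1, iterate_succ_apply' f n x⟩

theorem antitone_iterate_image {A : Set α} (hA : MapsTo f A A) :
    Antitone fun n => f^[n] '' A := by
  simp_rw [image_iterate_eq]
  exact Monotone.antitone_iterate_of_map_le (fun _ _ => image_mono) hA.image_subset

theorem exists_backward_orbit_of_surjOn {K : Set α} (hK : SurjOn f K K) {a : α} (ha : a ∈ K) :
    ∃ x : ℕ → α, x 0 = a ∧ (∀ n, f (x (n + 1)) = x n) ∧ ∀ n, x n ∈ K := by
  have hpre : ∀ b ∈ K, ∃ c ∈ K, f c = b := hK
  choose! g hgK hfg using hpre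
  have hg : MapsTo g K K := hgK
  refine ⟨fun n => g^[n] a, rfl, fun n => ?_, fun n => hg.iterate n ha⟩
  simp only [iterate_succ_apply']
  exact hfg _ (hg.iterate n ha)

end Orbits

section Topological

variable {X : Type*} [TopologicalSpace X] {f : X → X}

theorem eq_univ_of_forall_dense_orbit (hmin : ∀ x : X, Dense (range fun n => f^[n] x))
    {A : Set X} (hA : IsClosed A) (hne : A.Nonempty) (hmaps : MapsTo f A A) : A = univ := by
  obtain ⟨a, ha⟩ := hne
  have horbit : (range fun n => f^[n] a) ⊆ A := by
    rintro _ ⟨n, rfl⟩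
    exact hmaps.iterate n ha
  exact ((hmin a).mono horbit).closure_eq ▸ hA.closure_eq.symm

theorem surjective_of_forall_dense_orbit [CompactSpace X] [T2Space X] (hf : Continuous f)
    (hmin : ∀ x : X, Dense (range fun n => f^[n] x)) : Surjective f := fun b =>
  eq_univ_iff_forall.1 (eq_univ_of_forall_dense_orbit hmin (isCompact_range hf).isClosed
    ⟨f b, b, rfl⟩ (fun y _ => mem_range_self y)) b

theorem mapsTo_setOf_mapClusterPt_of_backward_orbit (hf : Continuous f) {x : ℕ → X}
    (hx : ∀ n, f (x (n + 1)) = x n) :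
    MapsTo f {y | MapClusterPt y atTop x} {y | MapClusterPt y atTop x} := by
  intro y hy
  have hshift : MapClusterPt y atTop (x ∘ (· + 1)) := by
    rwa [mapClusterPt_comp, map_add_atTop_eq_nat]
  have hfx : f ∘ x ∘ (· + 1) = x := funext hx
  rw [mem_ofPred, ← hfx]
  exact hshift.continuousAt_comp hf.continuousAt

theorem dense_range_of_forall_dense_orbit [CompactSpace X] (hf : Continuous f)
    (hmin : ∀ x : X, Dense (range fun n => f^[n] x)) {x : ℕ → X}
    (hx : ∀ n, f (x (n + 1)) = x n) : Dense (range x) := by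
  have hclusterPt : {y | MapClusterPt y atTop x} = univ :=
    eq_univ_of_forall_dense_orbit hmin isClosed_setOfPred_clusterPt
      (exists_clusterPt_of_compactSpace _) (mapsTo_setOf_mapClusterPt_of_backward_orbit hf hx)
  intro y
  have hy : MapClusterPt y atTop x := eq_univ_iff_forall.1 hclusterPt y
  exact hy.clusterPt.mem_closure_of_mem _ range_mem_map

variable [T2Space X]

theorem IsCompact.nonempty_iInter_iterate_image (hf : Continuous f) {A : Set X}
    (hA : IsCompact A) (hne : A.Nonempty) (hmaps : MapsTo f A A) :
    (⋂ n, f^[n] '' A).Nonempty :=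
  IsCompact.nonempty_iInter_of_directed_nonempty_isCompact_isClosed _
    (antitone_iterate_image hmaps).directed_ge (fun _ => hne.image _)
    (fun n => hA.image (hf.iterate n)) (fun n => (hA.image (hf.iterate n)).isClosed)

theorem IsCompact.surjOn_iInter_iterate_image (hf : Continuous f) {A : Set X}
    (hA : IsCompact A) (hmaps : MapsTo f A A) :
    SurjOn f (⋂ n, f^[n] '' A) (⋂ n, f^[n] '' A) := by
  intro a ha
  have hcompact : ∀ n, IsCompact (f⁻¹' {a} ∩ f^[n] '' A) := fun n =>
    (hA.image (hf.iterate n)).inter_left (isClosed_singleton.preimage hf)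
  have hnonempty : ∀ n, (f⁻¹' {a} ∩ f^[n] '' A).Nonempty := by
    intro n
    have han : a ∈ f '' (f^[n] '' A) := by
      rw [← image_comp, ← iterate_succ']
      exact mem_iInter.1 ha (n + 1)
    obtain ⟨b, hb, hfb⟩ := han
    exact ⟨b, hfb, hb⟩
  obtain ⟨b, hb⟩ := IsCompact.nonempty_iInter_of_directed_nonempty_isCompact_isClosed _
    (Antitone.directed_ge fun _ _ hnm =>
      inter_subset_inter_right _ (antitone_iterate_image hmaps hnm))
    hnonempty hcompact (fun n => (hcompact n).isClosed)
  rw [mem_iInter] at hb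
  exact ⟨b, mem_iInter.2 fun n => (hb n).2, (hb 0).1⟩

theorem dense_orbit_of_forall_dense_backward_orbit [CompactSpace X] (hf : Continuous f)
    (hback : ∀ x : ℕ → X, (∀ n, f (x (n + 1)) = x n) → Dense (range x)) (x₀ : X) :
    Dense (range fun n => f^[n] x₀) := by
  set A := closure (range fun n => f^[n] x₀)
  have hA : IsCompact A := isClosed_closure.isCompact
  have hmaps : MapsTo f A A := (mapsTo_range_iterate f x₀).closure hf
  obtain ⟨a, ha⟩ := hA.nonempty_iInter_iterate_image hf
    ⟨x₀, subset_closure ⟨0, rfl⟩⟩ hmaps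
  obtain ⟨x, -, hx, hxK⟩ := exists_backward_orbit_of_surjOn
    (hA.surjOn_iInter_iterate_image hf hmaps) ha
  have hxA : range x ⊆ A := by
    rintro _ ⟨n, rfl⟩
    simpa only [iterate_zero, image_id] using mem_iInter.1 (hxK n) 0
  exact dense_closure.1 ((hback x hx).mono hxA)

end Topological

/-- A continuous selfmap of a compact metric space is minimal if and only if
it is surjective and every backward orbit of every point is dense. -/
theorem minimal_iff_surjective_and_backward_orbits_dense
    {X : Type*} [MetricSpace X] [CompactSpace X]
    (f : X → X) (hf : Continuous f) :
    (∀ x : X, Dense (Set.range fun n => f^[n] x)) ↔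
      (Function.Surjective f ∧
        ∀ x : ℕ → X, (∀ n : ℕ, f (x (n + 1)) = x n) → Dense (Set.range x)) :=
  ⟨fun hmin => ⟨surjective_of_forall_dense_orbit hf hmin,
      fun _ hx => dense_range_of_forall_dense_orbit hf hmin hx⟩,
    fun ⟨_, hback⟩ => dense_orbit_of_forall_dense_backward_orbit hf hback⟩
end
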